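/- arXiv:2205.00586 — 8 statements merged into one kernel-verified Lean document; each statement's English description precedes it below -/
import Mathlib

section
/- Let 0 < β < 1, λ > 0, α ≥ 0, and let ξ be a real number. Then the function y ↦ (e^{iyξ} − 1)·α·e^{−λy}·y^{−1−β} is integrable on (0,∞) and ∫₀^∞ (e^{iyξ} − 1)·α·e^{−λy}·y^{−1−β} dy = α·Γ(−β)·((λ − iξ)^β − λ^β), where z^β denotes the principal complex power. -/
/-!
Both sides vanish at `ξ = 0`, so it suffices to compare `ξ`-derivatives. Differentiating under
the integral sign removes the factor `e^{iyξ} − 1` and one power of `y`, leaving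
`i ∫₀^∞ y^{−β} e^{−(λ−iξ)y} dy`, a Laplace transform of `y^{−β}` at the complex point `λ − iξ`.
At real points it equals `Γ(1−β) z^{β−1}` by the Gamma integral, and this extends to the half-plane
`Re z > 0` by the identity theorem. Since `Γ(1−β) = −β Γ(−β)`, this is also the `ξ`-derivative of
`Γ(−β) ((λ−iξ)^β − λ^β)`.
-/

open MeasureTheory Set Filter Topology Complex

lemma integrableOn_rpow_mul_exp_neg_mul {s b : ℝ} (hs : -1 < s) (hb : 0 < b) :
    IntegrableOn (fun y : ℝ => y ^ s * Real.exp (-(b * y))) (Ioi 0) := by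
  simpa [Real.rpow_one] using integrableOn_rpow_mul_exp_neg_mul_rpow hs one_pos hb

lemma continuousOn_rpow_mul_cexp_neg_mul (s : ℝ) (z : ℂ) :
    ContinuousOn (fun y : ℝ => ((y ^ s : ℝ) : ℂ) * cexp (-z * y)) (Ioi 0) :=
  (continuous_ofReal.comp_continuousOn fun y hy =>
    (Real.continuousAt_rpow_const y s (Or.inl (ne_of_gt hy))).continuousWithinAt).mul
    (by fun_prop)

lemma norm_rpow_mul_cexp_neg_mul (s : ℝ) (z : ℂ) {y : ℝ} (hy : 0 ≤ y) :
    ‖((y ^ s : ℝ) : ℂ) * cexp (-z * y)‖ = y ^ s * Real.exp (-(z.re * y)) := by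
  simp [norm_exp, abs_of_nonneg (Real.rpow_nonneg hy s)]

lemma integrableOn_rpow_mul_cexp_neg_mul {s : ℝ} (hs : -1 < s) {z : ℂ} (hz : 0 < z.re) :
    IntegrableOn (fun y : ℝ => ((y ^ s : ℝ) : ℂ) * cexp (-z * y)) (Ioi 0) := by
  refine Integrable.mono' (integrableOn_rpow_mul_exp_neg_mul hs hz)
    ((continuousOn_rpow_mul_cexp_neg_mul s z).aestronglyMeasurable measurableSet_Ioi) ?_
  filter_upwards [self_mem_ae_restrict measurableSet_Ioi] with y hy
  exact (norm_rpow_mul_cexp_neg_mul s z (le_of_lt hy)).le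

lemma integral_rpow_mul_cexp_neg_mul_ofReal {s : ℝ} (hs : -1 < s) {r : ℝ} (hr : 0 < r) :
    ∫ y in Ioi (0 : ℝ), ((y ^ s : ℝ) : ℂ) * cexp (-(r : ℂ) * y)
      = Real.Gamma (s + 1) * (r : ℂ) ^ (-((s : ℂ) + 1)) := by
  have hre : 0 < ((s : ℂ) + 1).re := by simp; linarith
  have hinv : (1 / (r : ℂ)) ^ ((s : ℂ) + 1) = (r : ℂ) ^ (-((s : ℂ) + 1)) := by
    rw [one_div, inv_cpow _ _ (by simp [arg_ofReal_of_nonneg hr.le, Real.pi_ne_zero.symm]),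
      cpow_neg]
  calc ∫ y in Ioi (0 : ℝ), ((y ^ s : ℝ) : ℂ) * cexp (-(r : ℂ) * y)
      = ∫ y in Ioi (0 : ℝ), (y : ℂ) ^ ((s : ℂ) + 1 - 1) * cexp (-((r : ℂ) * y)) := by
        refine setIntegral_congr_fun measurableSet_Ioi fun y hy => ?_
        simp [ofReal_cpow (le_of_lt hy)]
    _ = Real.Gamma (s + 1) * (r : ℂ) ^ (-((s : ℂ) + 1)) := by
        rw [integral_cpow_mul_exp_neg_mul_Ioi hre hr, hinv, mul_comm, ← ofReal_one,
          ← ofReal_add, Gamma_ofReal]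

lemma differentiableOn_integral_rpow_mul_cexp_neg_mul {s : ℝ} (hs : -1 < s) :
    DifferentiableOn ℂ (fun z : ℂ => ∫ y in Ioi (0 : ℝ), ((y ^ s : ℝ) : ℂ) * cexp (-z * y))
      {z | 0 < z.re} := by
  intro z₀ (hz₀ : 0 < z₀.re)
  refine DifferentiableAt.differentiableWithinAt ?_
  have hε : 0 < z₀.re / 2 := by positivity
  have hre : ∀ z ∈ Metric.ball z₀ (z₀.re / 2), z₀.re / 2 ≤ z.re := fun z hz => by
    have := (re_le_norm (z₀ - z)).trans_lt (by rwa [← Complex.dist_eq, dist_comm])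
    simp only [sub_re] at this
    linarith
  refine (hasDerivAt_integral_of_dominated_loc_of_deriv_le
    (F' := fun z y => -(((y ^ (s + 1) : ℝ) : ℂ) * cexp (-z * y)))
    (bound := fun y => y ^ (s + 1) * Real.exp (-(z₀.re / 2 * y)))
    (Metric.ball_mem_nhds z₀ hε)
    (Eventually.of_forall fun z =>
      (continuousOn_rpow_mul_cexp_neg_mul s z).aestronglyMeasurable measurableSet_Ioi)
    (integrableOn_rpow_mul_cexp_neg_mul hs hz₀)
    ((continuousOn_rpow_mul_cexp_neg_mul (s + 1) z₀).neg.aestronglyMeasurable measurableSet_Ioi)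
    ?_ (integrableOn_rpow_mul_exp_neg_mul (by linarith) hε) ?_).2.differentiableAt
  · filter_upwards [self_mem_ae_restrict measurableSet_Ioi] with y (hy : 0 < y) z hz
    rw [norm_neg, norm_rpow_mul_cexp_neg_mul _ _ hy.le]
    gcongr
    nlinarith [hre z hz]
  · filter_upwards [self_mem_ae_restrict measurableSet_Ioi] with y (hy : 0 < y) z _
    refine ((((hasDerivAt_id z).neg.mul_const (y : ℂ)).cexp).const_mul
      ((y ^ s : ℝ) : ℂ)).congr_deriv ?_
    rw [Real.rpow_add_one hy.ne', ofReal_mul]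
    simp only [Pi.neg_apply, id]
    ring

lemma integral_rpow_mul_cexp_neg_mul {s : ℝ} (hs : -1 < s) {z : ℂ} (hz : 0 < z.re) :
    ∫ y in Ioi (0 : ℝ), ((y ^ s : ℝ) : ℂ) * cexp (-z * y)
      = Real.Gamma (s + 1) * z ^ (-((s : ℂ) + 1)) := by
  have hU : IsOpen {z : ℂ | 0 < z.re} := isOpen_lt continuous_const continuous_re
  have hcpow : DifferentiableOn ℂ (fun z : ℂ => (Real.Gamma (s + 1) : ℂ) * z ^ (-((s : ℂ) + 1)))
      {z | 0 < z.re} := fun w hw =>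
    ((differentiableAt_id.cpow_const (Or.inl hw)).const_mul _).differentiableWithinAt
  have hreal : ∀ᶠ r : ℝ in 𝓝[≠] 1, (∫ y in Ioi (0 : ℝ), ((y ^ s : ℝ) : ℂ) * cexp (-(r : ℂ) * y))
      = Real.Gamma (s + 1) * (r : ℂ) ^ (-((s : ℂ) + 1)) := by
    filter_upwards [nhdsWithin_le_nhds (Ioi_mem_nhds one_pos)] with r hr
    exact integral_rpow_mul_cexp_neg_mul_ofReal hs hr
  have hofReal : Tendsto ofReal (𝓝[≠] (1 : ℝ)) (𝓝[≠] (1 : ℂ)) :=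
    tendsto_nhdsWithin_of_tendsto_nhds_of_eventually_within _
      (by simpa using continuous_ofReal.continuousWithinAt.tendsto (x := (1 : ℝ)) (s := {1}ᶜ))
      (eventually_nhdsWithin_of_forall fun r hr => by simpa using hr)
  exact ((differentiableOn_integral_rpow_mul_cexp_neg_mul hs).analyticOnNhd hU
    ).eqOn_of_preconnected_of_frequently_eq (hcpow.analyticOnNhd hU)
    (convex_halfSpace_re_gt 0).isPreconnected (by simp) (hofReal.frequently hreal.frequently) hz

noncomputable def tailIntegrand (β lam t y : ℝ) : ℂ :=
  (cexp (I * y * t) - 1) * cexp (-(lam : ℂ) * y) * ((y ^ (-1 - β) : ℝ) : ℂ)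

section tailIntegrand

variable {β lam : ℝ}

lemma continuousOn_tailIntegrand (t : ℝ) : ContinuousOn (tailIntegrand β lam t) (Ioi 0) :=
  (Continuous.continuousOn (by fun_prop)).mul (continuous_ofReal.comp_continuousOn
    fun y hy => (Real.continuousAt_rpow_const y _ (Or.inl (ne_of_gt hy))).continuousWithinAt)

lemma norm_tailIntegrand_le (t : ℝ) {y : ℝ} (hy : 0 < y) :
    ‖tailIntegrand β lam t y‖ ≤ |t| * (y ^ (-β) * Real.exp (-(lam * y))) := by
  have hosc : ‖cexp (I * y * t) - 1‖ ≤ y * |t| := by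
    simpa [mul_assoc, abs_mul, abs_of_pos hy] using
      Real.norm_exp_I_mul_ofReal_sub_one_le (x := y * t)
  have hpow : y ^ (-1 - β) * y = y ^ (-β) := by
    rw [← Real.rpow_add_one hy.ne']; ring_nf
  simp only [tailIntegrand, norm_mul, norm_exp, norm_real, Real.norm_eq_abs,
    abs_of_nonneg (Real.rpow_nonneg hy.le _)]
  calc ‖cexp (I * y * t) - 1‖ * Real.exp (-(lam : ℂ) * y).re * y ^ (-1 - β)
      ≤ y * |t| * Real.exp (-(lam * y)) * y ^ (-1 - β) := by
        gcongr
        simp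
    _ = |t| * (y ^ (-β) * Real.exp (-(lam * y))) := by rw [← hpow]; ring

lemma integrableOn_tailIntegrand (hβ1 : β < 1) (hlam : 0 < lam) (t : ℝ) :
    IntegrableOn (tailIntegrand β lam t) (Ioi 0) := by
  refine Integrable.mono'
    ((integrableOn_rpow_mul_exp_neg_mul (s := -β) (by linarith) hlam).const_mul |t|)
    ((continuousOn_tailIntegrand t).aestronglyMeasurable measurableSet_Ioi) ?_
  filter_upwards [self_mem_ae_restrict measurableSet_Ioi] with y hy
  exact norm_tailIntegrand_le t hy

lemma hasDerivAt_tailIntegrand (t : ℝ) {y : ℝ} (hy : 0 < y) :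
    HasDerivAt (fun t => tailIntegrand β lam t y)
      (I * (((y ^ (-β) : ℝ) : ℂ) * cexp (-((lam : ℂ) - I * t) * y))) t := by
  have hosc : HasDerivAt (fun t : ℝ => cexp (I * y * t)) (cexp (I * y * t) * (I * y)) t := by
    simpa [mul_comm] using (((hasDerivAt_id (t : ℂ)).const_mul (I * y)).cexp).comp_ofReal
  refine (((hosc.sub_const 1).mul_const _).mul_const _).congr_deriv ?_
  rw [show -((lam : ℂ) - I * t) * y = I * y * t + -(lam : ℂ) * y by ring, exp_add,
    show -β = -1 - β + 1 by ring, Real.rpow_add_one hy.ne', ofReal_mul]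
  ring

lemma hasDerivAt_integral_tailIntegrand (hβ1 : β < 1) (hlam : 0 < lam) (t : ℝ) :
    HasDerivAt (fun t => ∫ y in Ioi (0 : ℝ), tailIntegrand β lam t y)
      (I * (Real.Gamma (1 - β) * ((lam : ℂ) - I * t) ^ ((β : ℂ) - 1))) t := by
  have hre : ∀ t : ℝ, ((lam : ℂ) - I * t).re = lam := by simp
  have hderiv := (hasDerivAt_integral_of_dominated_loc_of_deriv_le
    (F' := fun t y => I * (((y ^ (-β) : ℝ) : ℂ) * cexp (-((lam : ℂ) - I * t) * y)))
    (bound := fun y => y ^ (-β) * Real.exp (-(lam * y)))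
    (univ_mem (f := 𝓝 t))
    (Eventually.of_forall fun t =>
      (continuousOn_tailIntegrand t).aestronglyMeasurable measurableSet_Ioi)
    (integrableOn_tailIntegrand hβ1 hlam t)
    ((continuousOn_const.mul (continuousOn_rpow_mul_cexp_neg_mul (-β) _)).aestronglyMeasurable
      measurableSet_Ioi)
    ?_ (integrableOn_rpow_mul_exp_neg_mul (by linarith) hlam) ?_).2
  · rwa [integral_const_mul,
      integral_rpow_mul_cexp_neg_mul (by linarith) (by rw [hre]; exact hlam),
      show -(((-β : ℝ) : ℂ) + 1) = (β : ℂ) - 1 by push_cast; ring,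
      show -β + 1 = 1 - β by ring] at hderiv
  · filter_upwards [self_mem_ae_restrict measurableSet_Ioi] with y (hy : 0 < y) t _
    rw [norm_mul, norm_I, one_mul, norm_rpow_mul_cexp_neg_mul _ _ hy.le, hre]
  · filter_upwards [self_mem_ae_restrict measurableSet_Ioi] with y hy t _
    exact hasDerivAt_tailIntegrand t hy

lemma hasDerivAt_Gamma_mul_cpow_sub (hβ : β ≠ 0) (hlam : 0 < lam) (t : ℝ) :
    HasDerivAt (fun t : ℝ => Real.Gamma (-β) * (((lam : ℂ) - I * t) ^ (β : ℂ) - lam ^ (β : ℂ)))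
      (I * (Real.Gamma (1 - β) * ((lam : ℂ) - I * t) ^ ((β : ℂ) - 1))) t := by
  have hslit : (lam : ℂ) - I * t ∈ slitPlane := Or.inl (by simp [hlam])
  have hGamma : Real.Gamma (1 - β) = -β * Real.Gamma (-β) := by
    rw [sub_eq_neg_add, Real.Gamma_add_one (neg_ne_zero.mpr hβ)]
  refine ((((((hasDerivAt_id (t : ℂ)).const_mul I).const_sub (lam : ℂ)).cpow_const
    hslit).sub_const _).const_mul _).comp_ofReal.congr_deriv ?_
  rw [hGamma]
  simp only [id]
  push_cast
  ring

theorem integral_tailIntegrand (hβ : β ≠ 0) (hβ1 : β < 1) (hlam : 0 < lam) (ξ : ℝ) :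
    ∫ y in Ioi (0 : ℝ), tailIntegrand β lam ξ y
      = Real.Gamma (-β) * (((lam : ℂ) - I * ξ) ^ (β : ℂ) - (lam : ℂ) ^ (β : ℂ)) := by
  have hzero : ∀ t : ℝ, HasDerivAt (fun t : ℝ => (∫ y in Ioi (0 : ℝ), tailIntegrand β lam t y)
      - Real.Gamma (-β) * (((lam : ℂ) - I * t) ^ (β : ℂ) - (lam : ℂ) ^ (β : ℂ))) 0 t := fun t =>
    ((hasDerivAt_integral_tailIntegrand hβ1 hlam t).sub
      (hasDerivAt_Gamma_mul_cpow_sub hβ hlam t)).congr_deriv (sub_self _)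
  have hconst := is_const_of_deriv_eq_zero (fun t => (hzero t).differentiableAt)
    (fun t => (hzero t).deriv) ξ 0
  simpa [tailIntegrand, sub_eq_zero] using hconst

end tailIntegrand

theorem gts_right_tail_integral_general (β lam α ξ : ℝ) (hβ0 : 0 < β) (hβ1 : β < 1)
    (hlam : 0 < lam) :
    IntegrableOn (fun y : ℝ =>
        (Complex.exp (Complex.I * y * ξ) - 1) * (α : ℂ) * Complex.exp (-(lam : ℂ) * y)
          * ((y ^ (-1 - β) : ℝ) : ℂ)) (Ioi 0) ∧
      ∫ y in Ioi (0 : ℝ),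
          (Complex.exp (Complex.I * y * ξ) - 1) * (α : ℂ) * Complex.exp (-(lam : ℂ) * y)
            * ((y ^ (-1 - β) : ℝ) : ℂ)
        = (α : ℂ) * (Real.Gamma (-β) : ℂ)
            * (((lam : ℂ) - Complex.I * ξ) ^ (β : ℂ) - (lam : ℂ) ^ (β : ℂ)) := by
  have hintegrand : (fun y : ℝ => (Complex.exp (Complex.I * y * ξ) - 1) * (α : ℂ)
      * Complex.exp (-(lam : ℂ) * y) * ((y ^ (-1 - β) : ℝ) : ℂ))
      = fun y => (α : ℂ) * tailIntegrand β lam ξ y := by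
    ext y; simp only [tailIntegrand]; ring
  rw [hintegrand, integral_const_mul, integral_tailIntegrand hβ0.ne' hβ1 hlam, mul_assoc]
  exact ⟨(integrableOn_tailIntegrand hβ1 hlam ξ).const_mul _, rfl⟩

/-- Let `0 < β < 1`, `λ > 0`, `α ≥ 0`, and `ξ : ℝ`. Then
`y ↦ (e^{iyξ} − 1)·α·e^{−λy}·y^{−1−β}` is integrable on `(0,∞)` and its integral equals
`α·Γ(−β)·((λ − iξ)^β − λ^β)` (principal complex power). -/
theorem gts_right_tail_integral (β lam α ξ : ℝ) (hβ0 : 0 < β) (hβ1 : β < 1)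
    (hlam : 0 < lam) (hα : 0 ≤ α) :
    IntegrableOn (fun y : ℝ =>
        (Complex.exp (Complex.I * y * ξ) - 1) * (α : ℂ) * Complex.exp (-(lam : ℂ) * y)
          * ((y ^ (-1 - β) : ℝ) : ℂ)) (Ioi 0) ∧
      ∫ y in Ioi (0 : ℝ),
          (Complex.exp (Complex.I * y * ξ) - 1) * (α : ℂ) * Complex.exp (-(lam : ℂ) * y)
            * ((y ^ (-1 - β) : ℝ) : ℂ)
        = (α : ℂ) * (Real.Gamma (-β) : ℂ)
            * (((lam : ℂ) - Complex.I * ξ) ^ (β : ℂ) - (lam : ℂ) ^ (β : ℂ)) :=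
  gts_right_tail_integral_general β lam α ξ hβ0 hβ1 hlam
end

section
/- Let 0 < β < 1, λ > 0, α ≥ 0, and let ξ be a real number. Then the function y ↦ (e^{−iyξ} − 1)·α·e^{−λy}·y^{−1−β} is integrable on (0,∞) and ∫₀^∞ (e^{−iyξ} − 1)·α·e^{−λy}·y^{−1−β} dy = α·Γ(−β)·((λ + iξ)^β − λ^β), where z^β denotes the principal complex power. -/
/-!
For `0 < z.re` and `0 < s`, integration by parts gives `z * L (s + 1) z = s * L s z` for the
Laplace transform `L s z = ∫₀^∞ e^{-zy} y^{s-1} dy`; hence `z ^ s * L s z` has zero derivative on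
the right half-plane and equals its value `Γ(s)` at `z = 1`.

The integral `Φ z = ∫₀^∞ (e^{-zy} - e^{-wy}) y^{-β-1} dy` converges for `β < 1` because
`‖e^{-zy} - e^{-wy}‖ ≤ ‖z - w‖ y e^{-my}`. Differentiating under the integral sign,
`Φ' z = -L (1 - β) z = -Γ(1 - β) z^{β-1} = β Γ(-β) z^{β-1}`, the derivative of
`Γ(-β) (z^β - w^β)`, and both functions vanish at `z = w`. The theorem is the case
`z = λ + iξ`, `w = λ`.
-/

open MeasureTheory Set Complex Filter Topology

namespace GtsLeftTail

lemma integrableOn_rpow_mul_exp_neg_mul {s b : ℝ} (hs : -1 < s) (hb : 0 < b) :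
    IntegrableOn (fun y : ℝ => y ^ s * Real.exp (-b * y)) (Ioi 0) := by
  simpa using integrableOn_rpow_mul_exp_neg_mul_rpow hs zero_lt_one hb

lemma norm_cexp_neg_mul_mul_rpow (z : ℂ) (s : ℝ) {y : ℝ} (hy : 0 ≤ y) :
    ‖cexp (-z * y) * ((y ^ s : ℝ) : ℂ)‖ = y ^ s * Real.exp (-z.re * y) := by
  rw [norm_mul, norm_exp, norm_real, Real.norm_of_nonneg (Real.rpow_nonneg hy s), mul_comm]
  simp

lemma continuousOn_cexp_neg_mul_mul_rpow (z : ℂ) (s : ℝ) :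
    ContinuousOn (fun y : ℝ => cexp (-z * y) * ((y ^ s : ℝ) : ℂ)) (Ioi 0) :=
  (by fun_prop : Continuous fun y : ℝ => cexp (-z * y)).continuousOn.mul
    (continuous_ofReal.comp_continuousOn (continuousOn_id.rpow_const fun _ hy => Or.inl hy.ne'))

lemma integrableOn_cexp_neg_mul_mul_rpow {s : ℝ} (hs : -1 < s) {z : ℂ} (hz : 0 < z.re) :
    IntegrableOn (fun y : ℝ => cexp (-z * y) * ((y ^ s : ℝ) : ℂ)) (Ioi 0) := by
  refine (integrableOn_rpow_mul_exp_neg_mul hs hz).mono'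
    ((continuousOn_cexp_neg_mul_mul_rpow z s).aestronglyMeasurable measurableSet_Ioi) ?_
  filter_upwards [ae_restrict_mem measurableSet_Ioi] with y (hy : 0 < y)
  exact (norm_cexp_neg_mul_mul_rpow z s hy.le).le

lemma norm_cexp_neg_mul_sub_le {z w : ℂ} {m y : ℝ} (hy : 0 ≤ y) (hz : m ≤ z.re)
    (hw : m ≤ w.re) :
    ‖cexp (-z * y) - cexp (-w * y)‖ ≤ y * Real.exp (-m * y) * ‖z - w‖ := by
  refine (convex_halfSpace_re_ge m).norm_image_sub_le_of_norm_hasDerivWithin_le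
    (f := fun u : ℂ => cexp (-u * y)) (f' := fun u => -y * cexp (-u * y))
    (fun u _ => ?_) (fun u hu => ?_) hw hz
  · simpa [mul_comm] using (((hasDerivAt_id u).neg.mul_const (y : ℂ)).cexp).hasDerivWithinAt
  · rw [norm_mul, norm_neg, norm_real, Real.norm_of_nonneg hy, norm_exp]
    gcongr
    have hmu : m * y ≤ u.re * y := mul_le_mul_of_nonneg_right hu hy
    simp only [neg_mul, neg_re, mul_re, ofReal_re, ofReal_im, mul_zero, sub_zero]
    linarith

lemma rpow_sub_one_mul_self {y : ℝ} (hy : 0 < y) (s : ℝ) : y ^ (s - 1) * y = y ^ s := by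
  rw [← Real.rpow_add_one hy.ne', sub_add_cancel]

lemma integrableOn_cexp_neg_mul_sub_mul_rpow {β : ℝ} (hβ : β < 1) {z w : ℂ} (hz : 0 < z.re)
    (hw : 0 < w.re) :
    IntegrableOn (fun y : ℝ => cexp (-z * y) * ((y ^ (-β - 1) : ℝ) : ℂ)
      - cexp (-w * y) * ((y ^ (-β - 1) : ℝ) : ℂ)) (Ioi 0) := by
  set m := min z.re w.re
  refine ((integrableOn_rpow_mul_exp_neg_mul (neg_lt_neg hβ) (lt_min hz hw)).const_mul
    ‖z - w‖).mono' (((continuousOn_cexp_neg_mul_mul_rpow z _).sub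
      (continuousOn_cexp_neg_mul_mul_rpow w _)).aestronglyMeasurable measurableSet_Ioi) ?_
  filter_upwards [ae_restrict_mem measurableSet_Ioi] with y (hy : 0 < y)
  calc ‖cexp (-z * y) * ((y ^ (-β - 1) : ℝ) : ℂ) - cexp (-w * y) * ((y ^ (-β - 1) : ℝ) : ℂ)‖
      = ‖cexp (-z * y) - cexp (-w * y)‖ * y ^ (-β - 1) := by
        rw [← sub_mul, norm_mul, norm_real, Real.norm_of_nonneg (Real.rpow_nonneg hy.le _)]
    _ ≤ y * Real.exp (-m * y) * ‖z - w‖ * y ^ (-β - 1) := by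
        gcongr
        exact norm_cexp_neg_mul_sub_le hy.le (min_le_left _ _) (min_le_right _ _)
    _ = ‖z - w‖ * (y ^ (-β) * Real.exp (-m * y)) := by
        rw [← rpow_sub_one_mul_self hy (-β)]
        ring

lemma hasDerivAt_integral_cexp_neg_mul_mul_rpow_sub {s : ℝ} (hs : -1 < s) (k : ℝ → ℂ)
    (hint : ∀ z : ℂ, 0 < z.re →
      IntegrableOn (fun y : ℝ => cexp (-z * y) * ((y ^ (s - 1) : ℝ) : ℂ) - k y) (Ioi 0))
    {z : ℂ} (hz : 0 < z.re) :
    HasDerivAt (fun z : ℂ => ∫ y in Ioi (0 : ℝ), (cexp (-z * y) * ((y ^ (s - 1) : ℝ) : ℂ) - k y))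
      (-∫ y in Ioi (0 : ℝ), cexp (-z * y) * ((y ^ s : ℝ) : ℂ)) z := by
  have hball : ∀ u ∈ Metric.ball z (z.re / 2), z.re / 2 < u.re := fun u hu => by
    have := (abs_re_le_norm (u - z)).trans_lt (mem_ball_iff_norm.mp hu)
    rw [sub_re, abs_lt] at this
    linarith
  rw [← integral_neg]
  refine (hasDerivAt_integral_of_dominated_loc_of_deriv_le
    (F := fun u y => cexp (-u * y) * ((y ^ (s - 1) : ℝ) : ℂ) - k y)
    (F' := fun u y => -(cexp (-u * y) * ((y ^ s : ℝ) : ℂ)))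
    (bound := fun y => y ^ s * Real.exp (-(z.re / 2) * y))
    (Metric.ball_mem_nhds z (half_pos hz)) ?_ (hint z hz) ?_ ?_
    (integrableOn_rpow_mul_exp_neg_mul hs (half_pos hz)) ?_).2
  · filter_upwards [Metric.ball_mem_nhds z (half_pos hz)] with u hu
    exact (hint u (by linarith [hball u hu])).aestronglyMeasurable
  · exact ((continuousOn_cexp_neg_mul_mul_rpow z s).aestronglyMeasurable measurableSet_Ioi).neg
  · filter_upwards [ae_restrict_mem measurableSet_Ioi] with y (hy : 0 < y) u hu
    rw [norm_neg, norm_cexp_neg_mul_mul_rpow u s hy.le]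
    gcongr
    linarith [hball u hu]
  · filter_upwards [ae_restrict_mem measurableSet_Ioi] with y (hy : 0 < y) u _
    have := (((hasDerivAt_neg' u).mul_const (y : ℂ)).cexp.mul_const
      ((y ^ (s - 1) : ℝ) : ℂ)).sub_const (k y)
    convert this using 1
    rw [← rpow_sub_one_mul_self hy s]
    push_cast
    ring

lemma eq_of_hasDerivAt_of_re_pos {f g f' : ℂ → ℂ}
    (hf : ∀ z : ℂ, 0 < z.re → HasDerivAt f (f' z) z)
    (hg : ∀ z : ℂ, 0 < z.re → HasDerivAt g (f' z) z) {w : ℂ} (hw : 0 < w.re) (hfg : f w = g w)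
    {z : ℂ} (hz : 0 < z.re) : f z = g z :=
  (isOpen_lt continuous_const continuous_re).eqOn_of_deriv_eq
    (convex_halfSpace_re_gt 0).isPreconnected
    (fun u hu => (hf u hu).differentiableAt.differentiableWithinAt)
    (fun u hu => (hg u hu).differentiableAt.differentiableWithinAt)
    (fun u hu => (hf u hu).deriv.trans (hg u hu).deriv.symm) hw hfg hz

lemma mul_integral_cexp_neg_mul_mul_rpow {s : ℝ} (hs : 0 < s) {z : ℂ} (hz : 0 < z.re) :
    z * ∫ y in Ioi (0 : ℝ), cexp (-z * y) * ((y ^ s : ℝ) : ℂ)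
      = s * ∫ y in Ioi (0 : ℝ), cexp (-z * y) * ((y ^ (s - 1) : ℝ) : ℂ) := by
  have hint_s := integrableOn_cexp_neg_mul_mul_rpow (by linarith) hz (s := s)
  have hint_s1 := integrableOn_cexp_neg_mul_mul_rpow (by linarith) hz (s := s - 1)
  have hderiv : ∀ y ∈ Ioi (0 : ℝ), HasDerivAt (fun y : ℝ => cexp (-z * y) * ((y ^ s : ℝ) : ℂ))
      (-z * (cexp (-z * y) * ((y ^ s : ℝ) : ℂ)) + s * (cexp (-z * y) * ((y ^ (s - 1) : ℝ) : ℂ)))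
      y := by
    intro y hy
    have hexp : HasDerivAt (fun y : ℝ => cexp (-z * y)) (cexp (-z * y) * -z) y := by
      simpa using ((ofRealCLM.hasDerivAt (x := y)).const_mul (-z)).cexp
    refine (hexp.mul
      (Real.hasDerivAt_rpow_const (p := s) (Or.inl (ne_of_gt hy))).ofReal_comp).congr_deriv ?_
    push_cast
    ring
  have hcont : ContinuousWithinAt (fun y : ℝ => cexp (-z * y) * ((y ^ s : ℝ) : ℂ)) (Ici 0) 0 :=
    ((by fun_prop : Continuous fun y : ℝ => cexp (-z * y)).continuousAt.mul
      (continuous_ofReal.continuousAt.comp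
        (Real.continuousAt_rpow_const 0 s (Or.inr hs.le)))).continuousWithinAt
  have hlim : Tendsto (fun y : ℝ => cexp (-z * y) * ((y ^ s : ℝ) : ℂ)) atTop (𝓝 0) := by
    refine squeeze_zero_norm' ?_ (tendsto_rpow_mul_exp_neg_mul_atTop_nhds_zero s z.re hz)
    filter_upwards [eventually_ge_atTop 0] with y hy
    exact (norm_cexp_neg_mul_mul_rpow z s hy).le
  have := integral_Ioi_of_hasDerivAt_of_tendsto hcont hderiv
    ((hint_s.const_mul _).add (hint_s1.const_mul _)) hlim
  rw [integral_add (hint_s.const_mul _) (hint_s1.const_mul _), integral_const_mul,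
    integral_const_mul] at this
  simp only [ofReal_zero, mul_zero, exp_zero, Real.zero_rpow hs.ne', sub_zero] at this
  linear_combination -this

lemma integral_cexp_neg_mul_mul_rpow {s : ℝ} (hs : 0 < s) {z : ℂ} (hz : 0 < z.re) :
    ∫ y in Ioi (0 : ℝ), cexp (-z * y) * ((y ^ (s - 1) : ℝ) : ℂ)
      = Real.Gamma s * z ^ (-(s : ℂ)) := by
  set F := fun z : ℂ => ∫ y in Ioi (0 : ℝ), cexp (-z * y) * ((y ^ (s - 1) : ℝ) : ℂ)
  have hF : ∀ z : ℂ, 0 < z.re →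
      HasDerivAt F (-∫ y in Ioi (0 : ℝ), cexp (-z * y) * ((y ^ s : ℝ) : ℂ)) z := fun z hz => by
    simpa only [Pi.zero_apply, sub_zero] using
      hasDerivAt_integral_cexp_neg_mul_mul_rpow_sub (by linarith) 0
        (fun u hu => by simpa only [Pi.zero_apply, sub_zero] using
          integrableOn_cexp_neg_mul_mul_rpow (by linarith) hu) hz
  have hF1 : F 1 = Real.Gamma s := by
    rw [Real.Gamma_eq_integral hs, ← integral_complex_ofReal]
    refine setIntegral_congr_fun measurableSet_Ioi fun y _ => ?_
    rw [neg_one_mul, ofReal_mul, ofReal_exp, ofReal_neg]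
  have hconst : z ^ (s : ℂ) * F z = Real.Gamma s := by
    refine eq_of_hasDerivAt_of_re_pos (f := fun z : ℂ => z ^ (s : ℂ) * F z)
      (g := fun _ => (Real.Gamma s : ℂ)) (f' := 0) (fun u hu => ?_)
      (fun u _ => hasDerivAt_const u _) (w := 1) (by simp) (by simpa using hF1) hz
    have hu0 : u ≠ 0 := fun h => by simp [h] at hu
    refine (((hasStrictDerivAt_cpow_const (c := (s : ℂ)) (Or.inl hu)).hasDerivAt).mul
      (hF u hu)).congr_deriv ?_
    have hpow : u ^ (s : ℂ) = u ^ ((s : ℂ) - 1) * u := by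
      rw [cpow_sub _ _ hu0, cpow_one, div_mul_cancel₀ _ hu0]
    rw [Pi.zero_apply, hpow]
    linear_combination (-u ^ ((s : ℂ) - 1)) * mul_integral_cexp_neg_mul_mul_rpow hs hu
  have hzs : z ^ (s : ℂ) ≠ 0 := cpow_ne_zero_iff.mpr (Or.inl fun h => by simp [h] at hz)
  rw [cpow_neg, ← hconst, mul_comm, inv_mul_cancel_left₀ hzs]

lemma integral_cexp_neg_mul_sub_mul_rpow {β : ℝ} (hβ0 : β ≠ 0) (hβ1 : β < 1) {z w : ℂ}
    (hz : 0 < z.re) (hw : 0 < w.re) :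
    ∫ y in Ioi (0 : ℝ), (cexp (-z * y) * ((y ^ (-β - 1) : ℝ) : ℂ)
      - cexp (-w * y) * ((y ^ (-β - 1) : ℝ) : ℂ))
      = Real.Gamma (-β) * (z ^ (β : ℂ) - w ^ (β : ℂ)) := by
  have hlaplace : ∀ u : ℂ, 0 < u.re → ∫ y in Ioi (0 : ℝ), cexp (-u * y) * ((y ^ (-β) : ℝ) : ℂ)
      = Real.Gamma (1 - β) * u ^ (-((1 - β : ℝ) : ℂ)) := fun u hu => by
    rw [show -β = 1 - β - 1 by ring]
    exact integral_cexp_neg_mul_mul_rpow (by linarith) hu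
  have hGamma : Real.Gamma (1 - β) = -β * Real.Gamma (-β) := by
    rw [← Real.Gamma_add_one (neg_ne_zero.mpr hβ0), neg_add_eq_sub]
  refine eq_of_hasDerivAt_of_re_pos (fun u hu => ?_) (fun u hu => ?_) hw ?_ hz
    (f := fun z : ℂ => ∫ y in Ioi (0 : ℝ), (cexp (-z * y) * ((y ^ (-β - 1) : ℝ) : ℂ)
      - cexp (-w * y) * ((y ^ (-β - 1) : ℝ) : ℂ)))
    (g := fun z : ℂ => Real.Gamma (-β) * (z ^ (β : ℂ) - w ^ (β : ℂ)))
    (f' := fun z : ℂ => -∫ y in Ioi (0 : ℝ), cexp (-z * y) * ((y ^ (-β) : ℝ) : ℂ))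
  · exact hasDerivAt_integral_cexp_neg_mul_mul_rpow_sub (neg_lt_neg hβ1) _
      (fun u hu => integrableOn_cexp_neg_mul_sub_mul_rpow hβ1 hu hw) hu
  · refine ((((hasStrictDerivAt_cpow_const (c := (β : ℂ)) (Or.inl hu)).hasDerivAt).sub_const
      (w ^ (β : ℂ))).const_mul (Real.Gamma (-β) : ℂ)).congr_deriv ?_
    rw [hlaplace u hu, hGamma, show -((1 - β : ℝ) : ℂ) = β - 1 by push_cast; ring]
    push_cast
    ring
  · simp only [sub_self, integral_zero, mul_zero]

end GtsLeftTail

theorem gts_left_tail_integral_general (β lam α ξ : ℝ) (hβ0 : 0 < β) (hβ1 : β < 1)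
    (hlam : 0 < lam) :
    IntegrableOn (fun y : ℝ =>
        (Complex.exp (-(Complex.I * y * ξ)) - 1) * (α : ℂ) * Complex.exp (-(lam : ℂ) * y)
          * ((y ^ (-1 - β) : ℝ) : ℂ)) (Ioi 0) ∧
      ∫ y in Ioi (0 : ℝ),
          (Complex.exp (-(Complex.I * y * ξ)) - 1) * (α : ℂ) * Complex.exp (-(lam : ℂ) * y)
            * ((y ^ (-1 - β) : ℝ) : ℂ)
        = (α : ℂ) * (Real.Gamma (-β) : ℂ)
            * (((lam : ℂ) + Complex.I * ξ) ^ (β : ℂ) - (lam : ℂ) ^ (β : ℂ)) := by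
  have hz : 0 < ((lam : ℂ) + I * ξ).re := by simpa using hlam
  have hw : 0 < (lam : ℂ).re := by simpa using hlam
  have hintegrand : (fun y : ℝ => (cexp (-(I * y * ξ)) - 1) * (α : ℂ) * cexp (-(lam : ℂ) * y)
      * ((y ^ (-1 - β) : ℝ) : ℂ)) = fun y : ℝ => (α : ℂ) *
        (cexp (-((lam : ℂ) + I * ξ) * y) * ((y ^ (-β - 1) : ℝ) : ℂ)
          - cexp (-(lam : ℂ) * y) * ((y ^ (-β - 1) : ℝ) : ℂ)) := by
    funext y
    rw [show -1 - β = -β - 1 by ring, show -((lam : ℂ) + I * ξ) * y = -(I * y * ξ) + -lam * y by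
      ring, exp_add]
    ring
  rw [hintegrand, integral_const_mul,
    GtsLeftTail.integral_cexp_neg_mul_sub_mul_rpow hβ0.ne' hβ1 hz hw, ← mul_assoc]
  exact ⟨(GtsLeftTail.integrableOn_cexp_neg_mul_sub_mul_rpow hβ1 hz hw).const_mul _, rfl⟩

/-- Let `0 < β < 1`, `λ > 0`, `α ≥ 0`, and `ξ : ℝ`. Then
`y ↦ (e^{−iyξ} − 1)·α·e^{−λy}·y^{−1−β}` is integrable on `(0,∞)` and its integral equals
`α·Γ(−β)·((λ + iξ)^β − λ^β)` (principal complex power). -/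
theorem gts_left_tail_integral (β lam α ξ : ℝ) (hβ0 : 0 < β) (hβ1 : β < 1)
    (hlam : 0 < lam) (hα : 0 ≤ α) :
    IntegrableOn (fun y : ℝ =>
        (Complex.exp (-(Complex.I * y * ξ)) - 1) * (α : ℂ) * Complex.exp (-(lam : ℂ) * y)
          * ((y ^ (-1 - β) : ℝ) : ℂ)) (Ioi 0) ∧
      ∫ y in Ioi (0 : ℝ),
          (Complex.exp (-(Complex.I * y * ξ)) - 1) * (α : ℂ) * Complex.exp (-(lam : ℂ) * y)
            * ((y ^ (-1 - β) : ℝ) : ℂ)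
        = (α : ℂ) * (Real.Gamma (-β) : ℂ)
            * (((lam : ℂ) + Complex.I * ξ) ^ (β : ℂ) - (lam : ℂ) ^ (β : ℂ)) :=
  gts_left_tail_integral_general β lam α ξ hβ0 hβ1 hlam
end

section
/- Let 0 < β < 1, λ > 0, and let ξ be a real number with |ξ| < λ. Then ∫₀^∞ (e^{iyξ} − 1)·e^{−λy}·y^{−1−β} dy = Σ_{k=1}^∞ (Γ(k−β)/(k!·λ^{k−β}))·(iξ)^k, where the series on the right converges. -/
open MeasureTheory Set

/-!
Expand `e^{iyξ} - 1` in its exponential series. Against the weight `e^{-λy} y^{-1-β}` the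
`k`-th term integrates, by Euler's integral for `Γ`, to `Γ(k-β)/(k! λ^{k-β}) (iξ)^k`, and the
integrals of the absolute values form the series `∑ Γ(k-β)/(k! λ^{k-β}) |ξ|^k`. Successive
coefficients have ratio `(k-β)/((k+1)λ) ≤ 1/λ`, so this series converges for `|ξ| < λ`, and the
expansion may be integrated term by term.
-/

noncomputable def gtsCoeff (β lam : ℝ) (n : ℕ) : ℝ :=
  Real.Gamma (n - β) / (n.factorial * lam ^ ((n : ℝ) - β))

noncomputable def gtsTerm (β lam ξ : ℝ) (n : ℕ) (y : ℝ) : ℂ :=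
  (Complex.I * y * ξ) ^ n / n.factorial * Complex.exp (-(lam : ℂ) * y)
    * ((y ^ (-1 - β) : ℝ) : ℂ)

section

variable {β lam ξ : ℝ}

lemma gtsCoeff_pos {n : ℕ} (hn : β < n) (hlam : 0 < lam) : 0 < gtsCoeff β lam n := by
  have := Real.Gamma_pos_of_pos (sub_pos.2 hn)
  have := Real.rpow_pos_of_pos hlam ((n : ℝ) - β)
  unfold gtsCoeff
  positivity

lemma gtsCoeff_succ_mul_le {n : ℕ} (hβ : -1 ≤ β) (hn : β < n) (hlam : 0 < lam) :
    gtsCoeff β lam (n + 1) * lam ≤ gtsCoeff β lam n := by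
  have hs : 0 < (n : ℝ) - β := sub_pos.2 hn
  have hrec : gtsCoeff β lam (n + 1) * lam = (n - β) / (n + 1) * gtsCoeff β lam n := by
    have hsucc : ((n + 1 : ℕ) : ℝ) - β = (n - β) + 1 := by push_cast; ring
    unfold gtsCoeff
    rw [hsucc, Real.Gamma_add_one hs.ne', Real.rpow_add_one hlam.ne', Nat.factorial_succ]
    push_cast
    field_simp
  rw [hrec]
  refine mul_le_of_le_one_left (gtsCoeff_pos hn hlam).le ?_
  rw [div_le_one (by positivity)]
  linarith

lemma summable_gtsCoeff_mul_pow {t : ℝ} (hβ : -1 ≤ β) (hβ1 : β < 1) (hlam : 0 < lam)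
    (ht0 : 0 ≤ t) (ht : t < lam) :
    Summable fun k : ℕ => gtsCoeff β lam (k + 1) * t ^ (k + 1) := by
  refine summable_of_ratio_norm_eventually_le ((div_lt_one hlam).2 ht) (.of_forall fun k => ?_)
  have hk : β < (k + 1 : ℕ) := hβ1.trans_le (by simp)
  have := gtsCoeff_pos hk hlam
  have := gtsCoeff_pos (hk.trans (by norm_num) : β < (k + 1 + 1 : ℕ)) hlam
  rw [Real.norm_of_nonneg (by positivity), Real.norm_of_nonneg (by positivity)]
  calc gtsCoeff β lam (k + 1 + 1) * t ^ (k + 1 + 1)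
      = gtsCoeff β lam (k + 1 + 1) * lam * (t ^ (k + 1) * t / lam) := by
        field_simp; ring
    _ ≤ gtsCoeff β lam (k + 1) * (t ^ (k + 1) * t / lam) := by
        gcongr; exact gtsCoeff_succ_mul_le hβ hk hlam
    _ = t / lam * (gtsCoeff β lam (k + 1) * t ^ (k + 1)) := by ring

lemma eqOn_pow_div_factorial_mul_exp_mul_rpow (n : ℕ) :
    EqOn (fun y : ℝ => y ^ n / n.factorial * Real.exp (-(lam * y)) * y ^ (-1 - β))
      (fun y => (n.factorial : ℝ)⁻¹ * (y ^ ((n - β) - 1) * Real.exp (-(lam * y)))) (Ioi 0) :=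
  fun y hy => by
    dsimp only
    rw [show (n : ℝ) - β - 1 = n + (-1 - β) by ring, Real.rpow_add hy, Real.rpow_natCast]
    ring

lemma integrableOn_pow_div_factorial_mul_exp_mul_rpow {n : ℕ} (hn : β < n) (hlam : 0 < lam) :
    IntegrableOn (fun y : ℝ => y ^ n / n.factorial * Real.exp (-(lam * y)) * y ^ (-1 - β))
      (Ioi 0) := by
  refine IntegrableOn.congr_fun (Integrable.const_mul ?_ _)
    (eqOn_pow_div_factorial_mul_exp_mul_rpow n).symm measurableSet_Ioi
  have h := integrableOn_rpow_mul_exp_neg_mul_rpow (s := n - β - 1) (by linarith) one_pos hlam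
  simp only [Real.rpow_one, neg_mul] at h
  exact h

lemma integral_pow_div_factorial_mul_exp_mul_rpow {n : ℕ} (hn : β < n) (hlam : 0 < lam) :
    ∫ y in Ioi (0 : ℝ), y ^ n / n.factorial * Real.exp (-(lam * y)) * y ^ (-1 - β) =
      gtsCoeff β lam n := by
  rw [setIntegral_congr_fun measurableSet_Ioi (eqOn_pow_div_factorial_mul_exp_mul_rpow n),
    integral_const_mul, Real.integral_rpow_mul_exp_neg_mul_Ioi (sub_pos.2 hn) hlam, gtsCoeff,
    one_div, Real.inv_rpow hlam.le]
  field_simp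

lemma gtsTerm_eq (n : ℕ) (y : ℝ) :
    gtsTerm β lam ξ n y = (Complex.I * ξ) ^ n *
      ((y ^ n / n.factorial * Real.exp (-(lam * y)) * y ^ (-1 - β) : ℝ) : ℂ) := by
  unfold gtsTerm
  push_cast
  rw [neg_mul]
  ring

lemma integrableOn_gtsTerm {n : ℕ} (hn : β < n) (hlam : 0 < lam) :
    IntegrableOn (gtsTerm β lam ξ n) (Ioi 0) := by
  rw [funext (gtsTerm_eq n)]
  exact (integrableOn_pow_div_factorial_mul_exp_mul_rpow hn hlam).ofReal.const_mul _

lemma integral_gtsTerm {n : ℕ} (hn : β < n) (hlam : 0 < lam) :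
    ∫ y in Ioi (0 : ℝ), gtsTerm β lam ξ n y = gtsCoeff β lam n * (Complex.I * ξ) ^ n := by
  rw [funext (gtsTerm_eq n), integral_const_mul, integral_complex_ofReal,
    integral_pow_div_factorial_mul_exp_mul_rpow hn hlam, mul_comm]

lemma integral_norm_gtsTerm {n : ℕ} (hn : β < n) (hlam : 0 < lam) :
    ∫ y in Ioi (0 : ℝ), ‖gtsTerm β lam ξ n y‖ = gtsCoeff β lam n * |ξ| ^ n := by
  have hnorm : EqOn (fun y => ‖gtsTerm β lam ξ n y‖)
      (fun y => |ξ| ^ n * (y ^ n / n.factorial * Real.exp (-(lam * y)) * y ^ (-1 - β)))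
      (Ioi 0) := fun y (hy : 0 < y) => by
    dsimp only
    rw [gtsTerm_eq, norm_mul, norm_pow, Complex.norm_mul, Complex.norm_I, one_mul,
      Complex.norm_real, Complex.norm_real, Real.norm_eq_abs, Real.norm_of_nonneg (by positivity)]
  rw [setIntegral_congr_fun measurableSet_Ioi hnorm, integral_const_mul,
    integral_pow_div_factorial_mul_exp_mul_rpow hn hlam, mul_comm]

lemma hasSum_gtsTerm (y : ℝ) :
    HasSum (fun k : ℕ => gtsTerm β lam ξ (k + 1) y)
      ((Complex.exp (Complex.I * y * ξ) - 1) * Complex.exp (-(lam : ℂ) * y)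
        * ((y ^ (-1 - β) : ℝ) : ℂ)) := by
  have h := (hasSum_nat_add_iff' 1).2 (NormedSpace.expSeries_div_hasSum_exp (Complex.I * y * ξ))
  simp only [Finset.range_one, Finset.sum_singleton, pow_zero, Nat.factorial_zero, Nat.cast_one,
    div_one, ← Complex.exp_eq_exp_ℂ] at h
  exact (h.mul_right _).mul_right _

end

/-- For `0 < β < 1`, `λ > 0` and `|ξ| < λ`,
`∫₀^∞ (e^{iyξ} − 1)·e^{−λy}·y^{−1−β} dy = Σ_{k=1}^∞ (Γ(k−β)/(k!·λ^{k−β}))·(iξ)^k`,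
with the series (indexed here by `k+1`, `k : ℕ`) convergent. -/
theorem gts_integral_series_expansion (β lam ξ : ℝ) (hβ0 : 0 < β) (hβ1 : β < 1)
    (hlam : 0 < lam) (hξ : |ξ| < lam) :
    Summable (fun k : ℕ =>
        ((Real.Gamma ((k + 1 : ℕ) - β) / ((k + 1 : ℕ).factorial * lam ^ (((k + 1 : ℕ) : ℝ) - β)) : ℝ) : ℂ)
          * (Complex.I * ξ) ^ (k + 1)) ∧
      ∫ y in Ioi (0 : ℝ),
          (Complex.exp (Complex.I * y * ξ) - 1) * Complex.exp (-(lam : ℂ) * y)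
            * ((y ^ (-1 - β) : ℝ) : ℂ)
        = ∑' k : ℕ,
            ((Real.Gamma ((k + 1 : ℕ) - β) / ((k + 1 : ℕ).factorial * lam ^ (((k + 1 : ℕ) : ℝ) - β)) : ℝ) : ℂ)
              * (Complex.I * ξ) ^ (k + 1) := by
  have hn (k : ℕ) : β < (k + 1 : ℕ) := hβ1.trans_le (by simp)
  have hsum_norm : Summable fun k : ℕ => ∫ y in Ioi (0 : ℝ), ‖gtsTerm β lam ξ (k + 1) y‖ := by
    simp_rw [integral_norm_gtsTerm (hn _) hlam]
    exact summable_gtsCoeff_mul_pow (by linarith) hβ1 hlam (abs_nonneg ξ) hξ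
  have hsum := hasSum_integral_of_summable_integral_norm
    (fun k => integrableOn_gtsTerm (hn k) hlam) hsum_norm
  simp_rw [integral_gtsTerm (hn _) hlam] at hsum
  refine ⟨hsum.summable, ?_⟩
  calc _ = ∫ y in Ioi (0 : ℝ), ∑' k : ℕ, gtsTerm β lam ξ (k + 1) y :=
        integral_congr_ae (.of_forall fun y => (hasSum_gtsTerm y).tsum_eq.symm)
    _ = _ := hsum.tsum_eq.symm
end

section
/- Let μ ∈ ℝ, α₊ ≥ 0, α₋ ≥ 0, λ₊ > 0, λ₋ > 0, and let ξ be a real number. For 0 < β₊ < 1 and 0 < β₋ < 1, let Ψ_{β₊,β₋}(ξ) = iμξ + α₊·Γ(−β₊)·((λ₊ − iξ)^{β₊} − λ₊^{β₊}) + α₋·Γ(−β₋)·((λ₋ + iξ)^{β₋} − λ₋^{β₋}). Then as (β₊, β₋) → (0, 0) with β₊ > 0 and β₋ > 0, Ψ_{β₊,β₋}(ξ) converges to the Bilateral Gamma characteristic exponent iμξ − α₊·Log(1 − iξ/λ₊) − α₋·Log(1 + iξ/λ₋), where Log denotes the principal complex logarithm. -/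
open Filter Complex Topology

lemma slope_cpow (z : ℂ) (hz : z ≠ 0) :
    Tendsto (fun β : ℝ => (z ^ (β : ℂ) - 1) / (β : ℂ)) (𝓝[>] (0:ℝ)) (𝓝 (Complex.log z)) := by
  have h1 : HasDerivAt (fun w : ℂ => Complex.exp (Complex.log z * w)) (Complex.log z) 0 := by
    have := ((hasDerivAt_id (0:ℂ)).const_mul (Complex.log z)).cexp
    simpa using this
  have h2 : HasDerivAt (fun β : ℝ => Complex.exp (Complex.log z * β)) (Complex.log z) 0 :=
    h1.comp_ofReal
  have h3 := hasDerivAt_iff_tendsto_slope.mp h2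
  have h4 : Tendsto (slope (fun β : ℝ => Complex.exp (Complex.log z * β)) 0) (𝓝[>] (0:ℝ))
      (𝓝 (Complex.log z)) := h3.mono_left (nhdsWithin_mono _ (fun x hx => ne_of_gt hx))
  refine h4.congr' ?_
  filter_upwards [self_mem_nhdsWithin] with β hβ
  simp only [slope_fun_def, vsub_eq_sub, Complex.ofReal_zero, sub_zero, mul_zero,
    Complex.exp_zero]
  rw [Complex.cpow_def_of_ne_zero hz, Complex.real_smul, Complex.ofReal_inv]
  ring

lemma gamma_cpow_limit (z w : ℂ) (hz : z ≠ 0) (hw : w ≠ 0) :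
    Tendsto (fun β : ℝ => (Real.Gamma (-β) : ℂ) * (z ^ (β : ℂ) - w ^ (β : ℂ)))
      (𝓝[>] (0:ℝ)) (𝓝 (-(Complex.log z - Complex.log w))) := by
  have hΓ : Tendsto (fun β : ℝ => (Real.Gamma (1 - β) : ℂ)) (𝓝[>] (0:ℝ)) (𝓝 1) := by
    have hc : ContinuousAt Real.Gamma 1 := by
      refine (Real.differentiableAt_Gamma fun m => ?_).continuousAt
      intro h
      have := Nat.cast_nonneg (α := ℝ) m
      linarith
    have hc2 : ContinuousAt (fun β : ℝ => Real.Gamma (1 - β)) 0 :=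
      ContinuousAt.comp (g := Real.Gamma) (f := fun β : ℝ => 1 - β) (x := 0)
        (by simpa using hc) (by fun_prop)
    have h0 : Tendsto (fun β : ℝ => Real.Gamma (1 - β)) (𝓝 (0:ℝ)) (𝓝 1) := by
      simpa [Real.Gamma_one] using hc2.tendsto
    exact (Complex.continuous_ofReal.tendsto 1).comp (h0.mono_left nhdsWithin_le_nhds)
  have hslope := (slope_cpow z hz).sub (slope_cpow w hw)
  have := (hΓ.mul hslope).neg
  have key : Tendsto (fun β : ℝ =>
      -((Real.Gamma (1 - β) : ℂ) * ((z ^ (β:ℂ) - 1) / β - (w ^ (β:ℂ) - 1) / β)))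
      (𝓝[>] (0:ℝ)) (𝓝 (-(Complex.log z - Complex.log w))) := by
    simpa using this
  refine key.congr' ?_
  filter_upwards [self_mem_nhdsWithin] with β (hβ : 0 < β)
  have hrec : Real.Gamma (1 - β) = -β * Real.Gamma (-β) := by
    have := Real.Gamma_add_one (s := -β) (by linarith)
    rw [← this]; ring_nf
  have hβ' : (β : ℂ) ≠ 0 := by exact_mod_cast hβ.ne'
  rw [hrec]
  push_cast
  field_simp
  ring

/-- As `(β₊, β₋) → (0,0)` from within the open first quadrant, the GTS characteristic
exponent converges to the Bilateral Gamma characteristic exponent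
`iμξ − α₊·Log(1 − iξ/λ₊) − α₋·Log(1 + iξ/λ₋)`. -/
theorem gts_tendsto_bilateral_gamma (μ αp αm lp lm ξ : ℝ)
    (hαp : 0 ≤ αp) (hαm : 0 ≤ αm) (hlp : 0 < lp) (hlm : 0 < lm) :
    Filter.Tendsto
      (fun p : ℝ × ℝ => Complex.I * μ * ξ
          + αp * Real.Gamma (-p.1)
              * (((lp : ℂ) - Complex.I * ξ) ^ (p.1 : ℂ) - (lp : ℂ) ^ (p.1 : ℂ))
          + αm * Real.Gamma (-p.2)
              * (((lm : ℂ) + Complex.I * ξ) ^ (p.2 : ℂ) - (lm : ℂ) ^ (p.2 : ℂ)))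
      (nhdsWithin (0, 0) (Set.Ioi 0 ×ˢ Set.Ioi 0))
      (nhds (Complex.I * μ * ξ - αp * Complex.log (1 - Complex.I * ξ / lp)
          - αm * Complex.log (1 + Complex.I * ξ / lm))) := by
  have hzp : ((lp : ℂ) - Complex.I * ξ) ≠ 0 := by
    intro h
    have := congrArg Complex.re h
    simp at this
    linarith
  have hzm : ((lm : ℂ) + Complex.I * ξ) ≠ 0 := by
    intro h
    have := congrArg Complex.re h
    simp at this
    linarith
  have hlp' : ((lp : ℂ)) ≠ 0 := by exact_mod_cast hlp.ne'
  have hlm' : ((lm : ℂ)) ≠ 0 := by exact_mod_cast hlm.ne'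
  have hfilter : nhdsWithin ((0:ℝ), (0:ℝ)) (Set.Ioi 0 ×ˢ Set.Ioi 0)
      = (𝓝[>] (0:ℝ)) ×ˢ (𝓝[>] (0:ℝ)) := by
    rw [nhdsWithin_prod_eq]
  rw [hfilter]
  have h1 : Tendsto (fun p : ℝ × ℝ =>
      (Real.Gamma (-p.1) : ℂ) * (((lp:ℂ) - Complex.I * ξ) ^ (p.1:ℂ) - (lp:ℂ) ^ (p.1:ℂ)))
      ((𝓝[>] (0:ℝ)) ×ˢ (𝓝[>] (0:ℝ)))
      (𝓝 (-(Complex.log ((lp:ℂ) - Complex.I * ξ) - Complex.log lp))) :=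
    (gamma_cpow_limit _ _ hzp hlp').comp tendsto_fst
  have h2 : Tendsto (fun p : ℝ × ℝ =>
      (Real.Gamma (-p.2) : ℂ) * (((lm:ℂ) + Complex.I * ξ) ^ (p.2:ℂ) - (lm:ℂ) ^ (p.2:ℂ)))
      ((𝓝[>] (0:ℝ)) ×ˢ (𝓝[>] (0:ℝ)))
      (𝓝 (-(Complex.log ((lm:ℂ) + Complex.I * ξ) - Complex.log lm))) :=
    (gamma_cpow_limit _ _ hzm hlm').comp tendsto_snd
  have hlogp : Complex.log (1 - Complex.I * ξ / lp)
      = Complex.log ((lp:ℂ) - Complex.I * ξ) - Complex.log lp := by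
    have : (1 - Complex.I * ξ / lp) = ((lp:ℂ))⁻¹ * ((lp:ℂ) - Complex.I * ξ) := by
      field_simp
    rw [this, show ((lp:ℂ))⁻¹ = ((lp⁻¹ : ℝ) : ℂ) by push_cast; ring,
      Complex.log_ofReal_mul (by positivity) hzp, Real.log_inv,
      Complex.ofReal_neg, Complex.ofReal_log hlp.le]
    ring
  have hlogm : Complex.log (1 + Complex.I * ξ / lm)
      = Complex.log ((lm:ℂ) + Complex.I * ξ) - Complex.log lm := by
    have : (1 + Complex.I * ξ / lm) = ((lm:ℂ))⁻¹ * ((lm:ℂ) + Complex.I * ξ) := by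
      field_simp
    rw [this, show ((lm:ℂ))⁻¹ = ((lm⁻¹ : ℝ) : ℂ) by push_cast; ring,
      Complex.log_ofReal_mul (by positivity) hzm, Real.log_inv,
      Complex.ofReal_neg, Complex.ofReal_log hlm.le]
    ring
  have := (tendsto_const_nhds (x := Complex.I * μ * ξ)
      (f := (𝓝[>] (0:ℝ)) ×ˢ (𝓝[>] (0:ℝ)))).add
    (((h1.const_mul (αp:ℂ))).add ((h2.const_mul (αm:ℂ))))
  convert this using 2 with p
  · ring
  · rw [hlogp, hlogm]; ring
end

section
/- Let α > 0, λ₊ > 0, λ₋ > 0, and let ξ be a real number. Then −α·Log(1 − iξ/λ₊) − α·Log(1 + iξ/λ₋) = −α·Log(1 − ((λ₋ − λ₊)/(λ₊·λ₋))·iξ + ξ²/(λ₊·λ₋)), where Log denotes the principal complex logarithm; in other words, the Bilateral Gamma characteristic exponent with equal scale parameters α₊ = α₋ = α coincides with the Variance-Gamma characteristic exponent with parameters (λ₋ − λ₊, 1, α, 1/(λ₋λ₊)). -/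
/-- For `α > 0`, `λ₊ > 0`, `λ₋ > 0` and `ξ : ℝ`, the Bilateral Gamma characteristic
exponent with equal scale parameters coincides with the Variance-Gamma characteristic
exponent:
`−α·Log(1 − iξ/λ₊) − α·Log(1 + iξ/λ₋)
  = −α·Log(1 − ((λ₋ − λ₊)/(λ₊λ₋))·iξ + ξ²/(λ₊λ₋))`. -/
theorem bilateral_gamma_eq_variance_gamma (α lp lm ξ : ℝ)
    (hα : 0 < α) (hlp : 0 < lp) (hlm : 0 < lm) :
    -(α : ℂ) * Complex.log (1 - Complex.I * ξ / lp)
        - (α : ℂ) * Complex.log (1 + Complex.I * ξ / lm)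
      = -(α : ℂ) * Complex.log
          (1 - ((lm - lp) / (lp * lm) : ℝ) * (Complex.I * ξ) + (ξ ^ 2 / (lp * lm) : ℝ)) := by
  set x : ℂ := 1 - Complex.I * ξ / lp with hx
  set y : ℂ := 1 + Complex.I * ξ / lm with hy
  have hxre : x.re = 1 := by simp [hx]
  have hyre : y.re = 1 := by simp [hy]
  have hx0 : x ≠ 0 := fun h => by simp [h] at hxre
  have hy0 : y ≠ 0 := fun h => by simp [h] at hyre
  have hax : |x.arg| < Real.pi / 2 := Complex.abs_arg_lt_pi_div_two_iff.2 (Or.inl (by rw [hxre]; norm_num))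
  have hay : |y.arg| < Real.pi / 2 := Complex.abs_arg_lt_pi_div_two_iff.2 (Or.inl (by rw [hyre]; norm_num))
  have harg : x.arg + y.arg ∈ Set.Ioc (-Real.pi) Real.pi := by
    constructor
    · have := abs_lt.1 hax; have := abs_lt.1 hay; linarith
    · have := abs_lt.1 hax; have := abs_lt.1 hay; linarith
  have hlog : Complex.log (x * y) = Complex.log x + Complex.log y :=
    Complex.log_mul hx0 hy0 harg
  have hxy : x * y = 1 - ((lm - lp) / (lp * lm) : ℝ) * (Complex.I * ξ) + (ξ ^ 2 / (lp * lm) : ℝ) := by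
    have hlp' : (lp : ℂ) ≠ 0 := Complex.ofReal_ne_zero.2 hlp.ne'
    have hlm' : (lm : ℂ) ≠ 0 := Complex.ofReal_ne_zero.2 hlm.ne'
    rw [hx, hy]
    push_cast
    field_simp
    ring_nf
    rw [Complex.I_sq]
    ring
  rw [← hxy, hlog]
  ring
end

section
/- Let μ ∈ ℝ, 0 < β₊ < 1, 0 < β₋ < 1, α₊ ≥ 0, α₋ ≥ 0, λ₊ > 0, λ₋ > 0, and let Ψ be the GTS characteristic exponent Ψ(ξ) = iμξ + α₊·Γ(−β₊)·((λ₊ − iξ)^{β₊} − λ₊^{β₊}) + α₋·Γ(−β₋)·((λ₋ + iξ)^{β₋} − λ₋^{β₋}). Define the cumulants κ₁ = μ + α₊·Γ(1−β₊)/λ₊^{1−β₊} − α₋·Γ(1−β₋)/λ₋^{1−β₋} and, for k ≥ 2, κ_k = α₊·Γ(k−β₊)/λ₊^{k−β₊} + (−1)^k·α₋·Γ(k−β₋)/λ₋^{k−β₋}. Then for every real ξ with |ξ| < min(λ₊, λ₋), the series Σ_{k=1}^∞ (κ_k/k!)·(iξ)^k converges and Ψ(ξ) = Σ_{k=1}^∞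 (κ_k/k!)·(iξ)^k. -/
/-!
Each tempered-stable half of `Ψ` is a binomial series: for `‖w‖ < λ`,
`(λ - w)^β = Σ choose(β, n) λ^(β - n) (-w)^n`, and the Gamma-function form of the Pochhammer
symbol, `Γ(n - β) = (-1)^n n! choose(β, n) Γ(-β)`, turns the `n`-th coefficient of
`Γ(-β) ((λ - w)^β - λ^β)` into `Γ(n - β) / λ^(n - β) / n!`. Taking `w = iξ` for the positive half
and `w = -iξ` for the negative one (which produces the sign `(-1)^k`) and adding the drift `iμξ`
gives the cumulant series.
-/

open Complex Nat

theorem ne_natCast_of_pos_of_lt_one {R : Type*} [Semiring R] [PartialOrder R]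
    [IsStrictOrderedRing R] {x : R} (h0 : 0 < x) (h1 : x < 1) (k : ℕ) : x ≠ k := by
  rintro rfl
  norm_cast at h0 h1
  omega

theorem Complex.ofReal_mul_cpow {l : ℝ} (hl : 0 < l) (w a : ℂ) :
    ((l : ℂ) * w) ^ a = (l : ℂ) ^ a * w ^ a := by
  rcases eq_or_ne w 0 with rfl | hw
  · rcases eq_or_ne a 0 with rfl | ha <;> simp [*]
  have hl' : (l : ℂ) ≠ 0 := by exact_mod_cast hl.ne'
  rw [cpow_def_of_ne_zero (mul_ne_zero hl' hw), log_ofReal_mul hl hw, add_mul, exp_add,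
    ofReal_log hl.le, ← cpow_def_of_ne_zero hl', ← cpow_def_of_ne_zero hw]

theorem Complex.hasSum_one_add_cpow {a x : ℂ} (hx : ‖x‖ < 1) :
    HasSum (fun n => Ring.choose a n * x ^ n) ((1 + x) ^ a) := by
  have hx' : x ∈ Metric.eball (0 : ℂ) 1 := by
    rw [Metric.mem_eball, edist_zero_right, enorm_eq_nnnorm]; exact_mod_cast hx
  simpa [binomialSeries, mul_comm] using one_add_cpow_hasFPowerSeriesOnBall_zero.hasSum hx'

theorem Complex.hasSum_ofReal_add_cpow {a z : ℂ} {l : ℝ} (hl : 0 < l) (hz : ‖z‖ < l) :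
    HasSum (fun n => Ring.choose a n * (l : ℂ) ^ (a - n) * z ^ n) ((l + z) ^ a) := by
  have hl' : (l : ℂ) ≠ 0 := by exact_mod_cast hl.ne'
  have hzl : ‖z / l‖ < 1 := by
    rwa [norm_div, norm_real, Real.norm_of_nonneg hl.le, div_lt_one hl]
  have hsplit : (l + z : ℂ) ^ a = l ^ a * (1 + z / l) ^ a := by
    rw [← ofReal_mul_cpow hl, mul_add, mul_one, mul_div_cancel₀ _ hl']
  rw [hsplit]
  refine ((hasSum_one_add_cpow hzl).mul_left ((l : ℂ) ^ a)).congr_fun fun n => ?_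
  rw [cpow_sub _ _ hl', cpow_natCast, div_pow]
  ring

theorem Complex.Gamma_neg_mul_choose_mul_neg_one_pow {a : ℂ} (ha : ∀ k : ℕ, a ≠ k) (n : ℕ) :
    Gamma (-a) * Ring.choose a n * (-1) ^ n = Gamma (n - a) / n ! := by
  have ha' : ∀ m : ℕ, -a ≠ -m := fun m h => ha m (neg_injective h)
  have hΓ := Gamma_add_nat_div_Gamma_eq (n := n) (-a) ha'
  rw [div_eq_iff (Gamma_ne_zero ha'), ascPochhammer_eval_neg_eq_descPochhammer,
    neg_add_eq_sub] at hΓ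
  rw [Ring.choose_eq_smul, hΓ, Polynomial.descPochhammer_smeval_eq_ascPochhammer,
    Polynomial.ascPochhammer_smeval_cast, Polynomial.ascPochhammer_smeval_eq_eval,
    descPochhammer_eval_eq_ascPochhammer, smul_eq_mul]
  ring

noncomputable def temperedStableCumulant (β l : ℝ) (k : ℕ) : ℝ :=
  Real.Gamma (k - β) / l ^ ((k : ℝ) - β)

theorem hasSum_temperedStableCumulant {β l : ℝ} (hβ : ∀ k : ℕ, β ≠ k) (hl : 0 < l) {w : ℂ}
    (hw : ‖w‖ < l) :
    HasSum (fun n : ℕ => ((temperedStableCumulant β l n / n ! : ℝ) : ℂ) * w ^ n)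
      (Real.Gamma (-β) * (l - w) ^ (β : ℂ)) := by
  have hβ' : ∀ k : ℕ, (β : ℂ) ≠ k := fun k h => hβ k (by exact_mod_cast h)
  have H := (hasSum_ofReal_add_cpow (a := β) hl (z := -w) (by rwa [norm_neg])).mul_left
    (Real.Gamma (-β) : ℂ)
  rw [← sub_eq_add_neg] at H
  refine H.congr_fun fun n => ?_
  have hpow : (l : ℂ) ^ ((β : ℂ) - n) = ((l ^ ((n : ℝ) - β))⁻¹ : ℝ) := by
    rw [← Real.rpow_neg hl.le, ofReal_cpow hl.le]; push_cast; ring_nf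
  have hcoeff := Gamma_neg_mul_choose_mul_neg_one_pow hβ' n
  rw [← ofReal_neg, Gamma_ofReal, ← ofReal_natCast, ← ofReal_sub, Gamma_ofReal] at hcoeff
  rw [hpow, neg_pow, temperedStableCumulant]
  push_cast
  linear_combination (-((l ^ ((n : ℝ) - β) : ℝ) : ℂ)⁻¹ * w ^ n) * hcoeff

theorem hasSum_temperedStableCumulant_succ {β l : ℝ} (hβ : ∀ k : ℕ, β ≠ k) (hl : 0 < l) {w : ℂ}
    (hw : ‖w‖ < l) :
    HasSum (fun k : ℕ => ((temperedStableCumulant β l (k + 1) / (k + 1)! : ℝ) : ℂ) * w ^ (k + 1))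
      (Real.Gamma (-β) * ((l - w) ^ (β : ℂ) - (l : ℂ) ^ (β : ℂ))) := by
  have hzero : ((temperedStableCumulant β l 0 / (0 : ℕ)! : ℝ) : ℂ) * w ^ 0
      = Real.Gamma (-β) * (l : ℂ) ^ (β : ℂ) := by
    rw [temperedStableCumulant, Nat.cast_zero, zero_sub, Real.rpow_neg hl.le, ← ofReal_cpow hl.le]
    simp [div_eq_mul_inv]
  have H := (hasSum_nat_add_iff' 1).2 (hasSum_temperedStableCumulant hβ hl hw)
  rwa [Finset.sum_range_one, hzero, ← mul_sub] at H

theorem gts_cumulant_series_general (μ βp βm αp αm lp lm : ℝ)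
    (hβp0 : 0 < βp) (hβp1 : βp < 1) (hβm0 : 0 < βm) (hβm1 : βm < 1)
    (hlp : 0 < lp) (hlm : 0 < lm)
    (Ψ : ℝ → ℂ)
    (hΨ : ∀ ξ : ℝ, Ψ ξ = Complex.I * μ * ξ
        + αp * Real.Gamma (-βp)
            * (((lp : ℂ) - Complex.I * ξ) ^ (βp : ℂ) - (lp : ℂ) ^ (βp : ℂ))
        + αm * Real.Gamma (-βm)
            * (((lm : ℂ) + Complex.I * ξ) ^ (βm : ℂ) - (lm : ℂ) ^ (βm : ℂ)))
    (κ : ℕ → ℝ)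
    (hκ1 : κ 1 = μ + αp * Real.Gamma (1 - βp) / lp ^ (1 - βp)
        - αm * Real.Gamma (1 - βm) / lm ^ (1 - βm))
    (hκ : ∀ k : ℕ, 2 ≤ k →
        κ k = αp * Real.Gamma ((k : ℝ) - βp) / lp ^ ((k : ℝ) - βp)
          + (-1 : ℝ) ^ k * αm * Real.Gamma ((k : ℝ) - βm) / lm ^ ((k : ℝ) - βm))
    (ξ : ℝ) (hξ : |ξ| < min lp lm) :
    Summable (fun k : ℕ =>
        ((κ (k + 1) / (k + 1 : ℕ).factorial : ℝ) : ℂ) * (Complex.I * ξ) ^ (k + 1)) ∧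
      Ψ ξ = ∑' k : ℕ,
          ((κ (k + 1) / (k + 1 : ℕ).factorial : ℝ) : ℂ) * (Complex.I * ξ) ^ (k + 1) := by
  have hκ_eq : ∀ k : ℕ, 1 ≤ k → κ k = (if k = 1 then μ else 0)
      + αp * temperedStableCumulant βp lp k + (-1) ^ k * αm * temperedStableCumulant βm lm k := by
    intro k hk
    rcases hk.eq_or_lt with rfl | hk
    · simp only [hκ1, temperedStableCumulant, if_true, Nat.cast_one]
      ring
    · rw [hκ k hk, if_neg hk.ne', temperedStableCumulant, temperedStableCumulant]
      ring
  have hξ' : ‖I * ξ‖ < min lp lm := by simpa using hξ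
  have Hp := hasSum_temperedStableCumulant_succ (ne_natCast_of_pos_of_lt_one hβp0 hβp1) hlp
    (hξ'.trans_le (min_le_left _ _))
  have Hm := hasSum_temperedStableCumulant_succ (ne_natCast_of_pos_of_lt_one hβm0 hβm1) hlm
    (w := -(I * ξ)) (by simpa using hξ'.trans_le (min_le_right _ _))
  have H : HasSum (fun k : ℕ => ((κ (k + 1) / (k + 1)! : ℝ) : ℂ) * (I * ξ) ^ (k + 1)) (Ψ ξ) := by
    rw [hΨ ξ, mul_assoc (αp : ℂ), mul_assoc (αm : ℂ), ← sub_neg_eq_add (lm : ℂ)]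
    refine (((hasSum_ite_eq 0 _).add (Hp.mul_left _)).add (Hm.mul_left _)).congr_fun fun k => ?_
    rw [hκ_eq (k + 1) k.succ_pos, neg_pow]
    simp only [add_eq_right]
    split_ifs with hk
    · subst hk; push_cast; ring
    · push_cast; ring
  exact ⟨H.summable, H.tsum_eq.symm⟩

/-- Cumulant expansion of the GTS characteristic exponent: for `|ξ| < min(λ₊, λ₋)`,
`Ψ(ξ) = Σ_{k=1}^∞ (κ_k/k!)·(iξ)^k` (here the series is indexed by `k+1`, `k : ℕ`),
and the series converges. -/
theorem gts_cumulant_series (μ βp βm αp αm lp lm : ℝ)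
    (hβp0 : 0 < βp) (hβp1 : βp < 1) (hβm0 : 0 < βm) (hβm1 : βm < 1)
    (hαp : 0 ≤ αp) (hαm : 0 ≤ αm) (hlp : 0 < lp) (hlm : 0 < lm)
    (Ψ : ℝ → ℂ)
    (hΨ : ∀ ξ : ℝ, Ψ ξ = Complex.I * μ * ξ
        + αp * Real.Gamma (-βp)
            * (((lp : ℂ) - Complex.I * ξ) ^ (βp : ℂ) - (lp : ℂ) ^ (βp : ℂ))
        + αm * Real.Gamma (-βm)
            * (((lm : ℂ) + Complex.I * ξ) ^ (βm : ℂ) - (lm : ℂ) ^ (βm : ℂ)))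
    (κ : ℕ → ℝ)
    (hκ1 : κ 1 = μ + αp * Real.Gamma (1 - βp) / lp ^ (1 - βp)
        - αm * Real.Gamma (1 - βm) / lm ^ (1 - βm))
    (hκ : ∀ k : ℕ, 2 ≤ k →
        κ k = αp * Real.Gamma ((k : ℝ) - βp) / lp ^ ((k : ℝ) - βp)
          + (-1 : ℝ) ^ k * αm * Real.Gamma ((k : ℝ) - βm) / lm ^ ((k : ℝ) - βm))
    (ξ : ℝ) (hξ : |ξ| < min lp lm) :
    Summable (fun k : ℕ =>
        ((κ (k + 1) / (k + 1 : ℕ).factorial : ℝ) : ℂ) * (Complex.I * ξ) ^ (k + 1)) ∧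
      Ψ ξ = ∑' k : ℕ,
          ((κ (k + 1) / (k + 1 : ℕ).factorial : ℝ) : ℂ) * (Complex.I * ξ) ^ (k + 1) :=
  gts_cumulant_series_general μ βp βm αp αm lp lm hβp0 hβp1 hβm0 hβm1 hlp hlm Ψ hΨ κ hκ1 hκ ξ hξ
end

section
/- Let μ ∈ ℝ, 0 < β₊ < 1, 0 < β₋ < 1, α₊ ≥ 0, α₋ ≥ 0, λ₊ > 0, λ₋ > 0, and let Ψ be the GTS characteristic exponent Ψ(ξ) = iμξ + α₊·Γ(−β₊)·((λ₊ − iξ)^{β₊} − λ₊^{β₊}) + α₋·Γ(−β₋)·((λ₋ + iξ)^{β₋} − λ₋^{β₋}), viewed as a function of a real variable ξ. Then Ψ is infinitely differentiable at 0 and its iterated derivatives at 0 are given by the cumulants: the first derivative of Ψ at 0 equals i·κ₁ with κ₁ = μ + α₊·Γ(1−β₊)/λ₊^{1−β₊} − α₋·Γ(1−β₋)/λ₋^{1−β₋}, and for every k ≥ 2 the k-th iterated derivative of Ψ at 0 equals i^k·κ_k with κ_k = α₊·Γ(k−β₊)/λ₊^{k−β₊} + (−1)^k·α₋·Γ(k−β₋)/λ₋^{k−β₋}.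 -/
open Complex Finset

private lemma gts_slit (a : ℝ) (ha : 0 < a) (c : ℂ) (hc : c.re = 0) (ξ : ℝ) :
    (a : ℂ) + c * ξ ∈ Complex.slitPlane := by
  refine Or.inl ?_
  simp [Complex.add_re, Complex.mul_re, hc, ha]

private lemma gts_hasDerivAt (a : ℝ) (ha : 0 < a) (c b : ℂ) (hc : c.re = 0) (ξ : ℝ) :
    HasDerivAt (fun ξ : ℝ => ((a : ℂ) + c * ξ) ^ b)
      (b * ((a : ℂ) + c * ξ) ^ (b - 1) * c) ξ := by
  have h1 : HasDerivAt (fun z : ℂ => (a : ℂ) + c * z) c (ξ : ℂ) := by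
    simpa using ((hasDerivAt_id (ξ : ℂ)).const_mul c).const_add (a : ℂ)
  exact (h1.cpow_const (gts_slit a ha c hc ξ)).comp_ofReal

private lemma gts_contDiffAt (a : ℝ) (ha : 0 < a) (c b : ℂ) (hc : c.re = 0) (ξ : ℝ) :
    ContDiffAt ℝ (⊤ : ℕ∞) (fun ξ : ℝ => ((a : ℂ) + c * ξ) ^ b) ξ := by
  have hF : AnalyticAt ℂ (fun z : ℂ => ((a : ℂ) + c * z) ^ b) (ξ : ℂ) := by
    refine AnalyticAt.cpow ?_ analyticAt_const ?_
    · exact analyticAt_const.add (analyticAt_const.mul analyticAt_id)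
    · simpa using gts_slit a ha c hc ξ
  have hR : AnalyticAt ℝ (fun z : ℂ => ((a : ℂ) + c * z) ^ b) (ξ : ℂ) := hF.restrictScalars
  have hco : AnalyticAt ℝ (fun ξ : ℝ => (ξ : ℂ)) ξ := Complex.ofRealCLM.analyticAt ξ
  exact (hR.comp hco).contDiffAt

private lemma gts_gamma_prod (β : ℝ) (hβ0 : 0 < β) (hβ1 : β < 1) (k : ℕ) :
    Real.Gamma (-β) * ∏ j ∈ Finset.range k, (β - j) = (-1) ^ k * Real.Gamma ((k : ℝ) - β) := by
  induction k with
  | zero => simp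
  | succ k ih =>
    have hne : (k : ℝ) - β ≠ 0 := by
      rcases Nat.eq_zero_or_pos k with hk | hk
      · simp [hk]; linarith
      · have : (1 : ℝ) ≤ k := by exact_mod_cast hk
        intro h; nlinarith
    have hG : Real.Gamma (((k : ℕ) + 1 : ℝ) - β) = ((k : ℝ) - β) * Real.Gamma ((k : ℝ) - β) := by
      have := Real.Gamma_add_one hne
      rw [show ((k : ℕ) + 1 : ℝ) - β = ((k : ℝ) - β) + 1 by ring]
      exact this
    rw [Finset.prod_range_succ, ← mul_assoc, ih]
    push_cast
    rw [hG]
    ring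

/-- The GTS characteristic exponent `Ψ : ℝ → ℂ` is infinitely differentiable at `0`
and its iterated derivatives at `0` are `i^k·κ_k` where `κ_k` are the cumulants. -/
theorem gts_iterated_deriv_cumulants (μ βp βm αp αm lp lm : ℝ)
    (hβp0 : 0 < βp) (hβp1 : βp < 1) (hβm0 : 0 < βm) (hβm1 : βm < 1)
    (hαp : 0 ≤ αp) (hαm : 0 ≤ αm) (hlp : 0 < lp) (hlm : 0 < lm)
    (Ψ : ℝ → ℂ)
    (hΨ : ∀ ξ : ℝ, Ψ ξ = Complex.I * μ * ξ
        + αp * Real.Gamma (-βp)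
            * (((lp : ℂ) - Complex.I * ξ) ^ (βp : ℂ) - (lp : ℂ) ^ (βp : ℂ))
        + αm * Real.Gamma (-βm)
            * (((lm : ℂ) + Complex.I * ξ) ^ (βm : ℂ) - (lm : ℂ) ^ (βm : ℂ))) :
    ContDiffAt ℝ (⊤ : ℕ∞) Ψ 0 ∧
      iteratedDeriv 1 Ψ 0
        = Complex.I * ((μ + αp * Real.Gamma (1 - βp) / lp ^ (1 - βp)
            - αm * Real.Gamma (1 - βm) / lm ^ (1 - βm) : ℝ) : ℂ) ∧
      ∀ k : ℕ, 2 ≤ k →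
        iteratedDeriv k Ψ 0
          = Complex.I ^ k * ((αp * Real.Gamma ((k : ℝ) - βp) / lp ^ ((k : ℝ) - βp)
              + (-1 : ℝ) ^ k * αm * Real.Gamma ((k : ℝ) - βm) / lm ^ ((k : ℝ) - βm) : ℝ) : ℂ) := by
  have hcm : (Complex.I).re = 0 := by simp
  have hcp : (-Complex.I).re = 0 := by simp
  have hΨ' : Ψ = fun ξ : ℝ => Complex.I * μ * ξ
      + (αp : ℂ) * (Real.Gamma (-βp) : ℂ)
          * (((lp : ℂ) + (-Complex.I) * ξ) ^ (βp : ℂ) - (lp : ℂ) ^ (βp : ℂ))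
      + (αm : ℂ) * (Real.Gamma (-βm) : ℂ)
          * (((lm : ℂ) + Complex.I * ξ) ^ (βm : ℂ) - (lm : ℂ) ^ (βm : ℂ)) := by
    funext ξ
    rw [hΨ ξ, show (lp : ℂ) - Complex.I * ξ = (lp : ℂ) + (-Complex.I) * ξ by ring]
  -- iterated derivative formula, valid everywhere
  have hIter : ∀ (k : ℕ) (ξ : ℝ), iteratedDeriv (k + 1) Ψ ξ =
      (if k = 0 then Complex.I * μ else 0)
      + (αp : ℂ) * (Real.Gamma (-βp) : ℂ) * ((-Complex.I) ^ (k + 1)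
          * (∏ j ∈ Finset.range (k + 1), ((βp : ℂ) - j))
          * ((lp : ℂ) + (-Complex.I) * ξ) ^ ((βp : ℂ) - ((k + 1 : ℕ) : ℂ)))
      + (αm : ℂ) * (Real.Gamma (-βm) : ℂ) * (Complex.I ^ (k + 1)
          * (∏ j ∈ Finset.range (k + 1), ((βm : ℂ) - j))
          * ((lm : ℂ) + Complex.I * ξ) ^ ((βm : ℂ) - ((k + 1 : ℕ) : ℂ))) := by
    intro k
    induction k with
    | zero =>
      intro ξ
      rw [iteratedDeriv_one, hΨ']
      have hd1 : HasDerivAt (fun ξ : ℝ => Complex.I * (μ : ℂ) * ξ) (Complex.I * μ) ξ := by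
        simpa using (Complex.ofRealCLM.hasDerivAt (x := ξ)).const_mul (Complex.I * (μ : ℂ))
      have hd2 := ((gts_hasDerivAt lp hlp (-Complex.I) (βp : ℂ) hcp ξ).sub_const
        ((lp : ℂ) ^ (βp : ℂ))).const_mul ((αp : ℂ) * (Real.Gamma (-βp) : ℂ))
      have hd3 := ((gts_hasDerivAt lm hlm Complex.I (βm : ℂ) hcm ξ).sub_const
        ((lm : ℂ) ^ (βm : ℂ))).const_mul ((αm : ℂ) * (Real.Gamma (-βm) : ℂ))
      have hD := (hd1.add hd2).add hd3
      simp only [Pi.add_def] at hD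
      rw [hD.deriv]
      simp only [if_pos, Finset.prod_range_one, Nat.cast_zero, Nat.cast_one, sub_zero,
        pow_one, Nat.zero_add]
      ring
    | succ k ih =>
      intro ξ
      rw [iteratedDeriv_succ, funext ih]
      have hfe : (fun ξ : ℝ => (if k = 0 then Complex.I * μ else 0)
          + (αp : ℂ) * (Real.Gamma (-βp) : ℂ) * ((-Complex.I) ^ (k + 1)
              * (∏ j ∈ Finset.range (k + 1), ((βp : ℂ) - j))
              * ((lp : ℂ) + (-Complex.I) * ξ) ^ ((βp : ℂ) - ((k + 1 : ℕ) : ℂ)))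
          + (αm : ℂ) * (Real.Gamma (-βm) : ℂ) * (Complex.I ^ (k + 1)
              * (∏ j ∈ Finset.range (k + 1), ((βm : ℂ) - j))
              * ((lm : ℂ) + Complex.I * ξ) ^ ((βm : ℂ) - ((k + 1 : ℕ) : ℂ))))
          = fun ξ : ℝ => (if k = 0 then Complex.I * μ else 0)
          + ((αp : ℂ) * (Real.Gamma (-βp) : ℂ) * ((-Complex.I) ^ (k + 1)
              * ∏ j ∈ Finset.range (k + 1), ((βp : ℂ) - j)))
              * ((lp : ℂ) + (-Complex.I) * ξ) ^ ((βp : ℂ) - ((k + 1 : ℕ) : ℂ))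
          + ((αm : ℂ) * (Real.Gamma (-βm) : ℂ) * (Complex.I ^ (k + 1)
              * ∏ j ∈ Finset.range (k + 1), ((βm : ℂ) - j)))
              * ((lm : ℂ) + Complex.I * ξ) ^ ((βm : ℂ) - ((k + 1 : ℕ) : ℂ)) := by
        funext x; ring
      rw [hfe]
      have hd2 := (gts_hasDerivAt lp hlp (-Complex.I)
          ((βp : ℂ) - ((k + 1 : ℕ) : ℂ)) hcp ξ).const_mul
        ((αp : ℂ) * (Real.Gamma (-βp) : ℂ) * ((-Complex.I) ^ (k + 1)
          * ∏ j ∈ Finset.range (k + 1), ((βp : ℂ) - j)))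
      have hd3 := (gts_hasDerivAt lm hlm Complex.I
          ((βm : ℂ) - ((k + 1 : ℕ) : ℂ)) hcm ξ).const_mul
        ((αm : ℂ) * (Real.Gamma (-βm) : ℂ) * (Complex.I ^ (k + 1)
          * ∏ j ∈ Finset.range (k + 1), ((βm : ℂ) - j)))
      have hD := ((hasDerivAt_const ξ (if k = 0 then Complex.I * (μ : ℂ) else 0)).add hd2).add hd3
      simp only [Pi.add_def] at hD
      rw [hD.deriv]
      have e1 : (βp : ℂ) - ((k + 1 : ℕ) : ℂ) - 1 = (βp : ℂ) - ((k + 1 + 1 : ℕ) : ℂ) := by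
        push_cast; ring
      have e2 : (βm : ℂ) - ((k + 1 : ℕ) : ℂ) - 1 = (βm : ℂ) - ((k + 1 + 1 : ℕ) : ℂ) := by
        push_cast; ring
      rw [e1, e2, if_neg (Nat.succ_ne_zero k)]
      conv_rhs => rw [Finset.prod_range_succ (f := fun j : ℕ => (βp : ℂ) - j),
        Finset.prod_range_succ (f := fun j : ℕ => (βm : ℂ) - j)]
      push_cast
      ring
  have hΓp := gts_gamma_prod βp hβp0 hβp1
  have hΓm := gts_gamma_prod βm hβm0 hβm1
  refine ⟨?_, ?_, ?_⟩
  · -- smoothness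
    rw [hΨ']
    refine ContDiffAt.add (ContDiffAt.add ?_ ?_) ?_
    · exact contDiffAt_const.mul (Complex.ofRealCLM.contDiff.contDiffAt)
    · exact contDiffAt_const.mul
        (((gts_contDiffAt lp hlp (-Complex.I) (βp : ℂ) hcp 0)).sub contDiffAt_const)
    · exact contDiffAt_const.mul
        (((gts_contDiffAt lm hlm Complex.I (βm : ℂ) hcm 0)).sub contDiffAt_const)
  · -- first derivative
    have h := hIter 0 0
    norm_num at h
    rw [iteratedDeriv_one, h]
    have hbp : Real.Gamma (1 - βp) = -βp * Real.Gamma (-βp) := by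
      have := Real.Gamma_add_one (neg_ne_zero.mpr hβp0.ne')
      rw [show (1 : ℝ) - βp = -βp + 1 by ring, this]
    have hbm : Real.Gamma (1 - βm) = -βm * Real.Gamma (-βm) := by
      have := Real.Gamma_add_one (neg_ne_zero.mpr hβm0.ne')
      rw [show (1 : ℝ) - βm = -βm + 1 by ring, this]
    have hrp : lp ^ (βp - 1) = (lp ^ (1 - βp))⁻¹ := by
      rw [show βp - 1 = -(1 - βp) by ring, Real.rpow_neg hlp.le]
    have hrm : lm ^ (βm - 1) = (lm ^ (1 - βm))⁻¹ := by
      rw [show βm - 1 = -(1 - βm) by ring, Real.rpow_neg hlm.le]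
    have hlpc : ((lp : ℂ)) ^ ((βp : ℂ) - 1) = ((lp ^ (βp - 1) : ℝ) : ℂ) := by
      rw [show (βp : ℂ) - 1 = ((βp - 1 : ℝ) : ℂ) by push_cast; ring,
        Complex.ofReal_cpow hlp.le]
    have hlmc : ((lm : ℂ)) ^ ((βm : ℂ) - 1) = ((lm ^ (βm - 1) : ℝ) : ℂ) := by
      rw [show (βm : ℂ) - 1 = ((βm - 1 : ℝ) : ℂ) by push_cast; ring,
        Complex.ofReal_cpow hlm.le]
    rw [hlpc, hlmc, hbp, hbm, hrp, hrm]
    have hlp0 : (lp : ℝ) ^ (1 - βp) ≠ 0 := (Real.rpow_pos_of_pos hlp _).ne'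
    have hlm0 : (lm : ℝ) ^ (1 - βm) ≠ 0 := (Real.rpow_pos_of_pos hlm _).ne'
    push_cast
    field_simp
    ring
  · -- higher derivatives
    intro k hk
    obtain ⟨m, rfl⟩ : ∃ m, k = m + 1 := ⟨k - 1, (Nat.succ_pred_eq_of_pos (by omega)).symm⟩
    have hm0 : m ≠ 0 := by omega
    have h := hIter m 0
    rw [if_neg hm0] at h
    rw [h]
    set n := m + 1 with hn
    have hrp : lp ^ (βp - (n : ℝ)) = (lp ^ ((n : ℝ) - βp))⁻¹ := by
      rw [show βp - (n : ℝ) = -((n : ℝ) - βp) by ring, Real.rpow_neg hlp.le]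
    have hrm : lm ^ (βm - (n : ℝ)) = (lm ^ ((n : ℝ) - βm))⁻¹ := by
      rw [show βm - (n : ℝ) = -((n : ℝ) - βm) by ring, Real.rpow_neg hlm.le]
    have hlpc : ((lp : ℂ) + (-Complex.I) * (0 : ℝ)) ^ ((βp : ℂ) - ((n : ℕ) : ℂ))
        = ((lp ^ (βp - (n : ℝ)) : ℝ) : ℂ) := by
      rw [show (lp : ℂ) + (-Complex.I) * ((0 : ℝ) : ℂ) = (lp : ℂ) by push_cast; ring,
        show (βp : ℂ) - ((n : ℕ) : ℂ) = ((βp - (n : ℝ) : ℝ) : ℂ) by push_cast; ring,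
        Complex.ofReal_cpow hlp.le]
    have hlmc : ((lm : ℂ) + Complex.I * (0 : ℝ)) ^ ((βm : ℂ) - ((n : ℕ) : ℂ))
        = ((lm ^ (βm - (n : ℝ)) : ℝ) : ℂ) := by
      rw [show (lm : ℂ) + Complex.I * ((0 : ℝ) : ℂ) = (lm : ℂ) by push_cast; ring,
        show (βm : ℂ) - ((n : ℕ) : ℂ) = ((βm - (n : ℝ) : ℝ) : ℂ) by push_cast; ring,
        Complex.ofReal_cpow hlm.le]
    rw [hlpc, hlmc]
    have hPp : (∏ j ∈ Finset.range n, ((βp : ℂ) - j))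
        = ((∏ j ∈ Finset.range n, (βp - (j : ℝ)) : ℝ) : ℂ) := by
      push_cast; rfl
    have hPm : (∏ j ∈ Finset.range n, ((βm : ℂ) - j))
        = ((∏ j ∈ Finset.range n, (βm - (j : ℝ)) : ℝ) : ℂ) := by
      push_cast; rfl
    rw [hPp, hPm]
    have hgp : ((Real.Gamma (-βp) : ℝ) : ℂ) * ((∏ j ∈ Finset.range n, (βp - (j : ℝ)) : ℝ) : ℂ)
        = (-1 : ℂ) ^ n * ((Real.Gamma ((n : ℝ) - βp) : ℝ) : ℂ) := by
      rw [← Complex.ofReal_mul, hΓp n]; push_cast; ring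
    have hgm : ((Real.Gamma (-βm) : ℝ) : ℂ) * ((∏ j ∈ Finset.range n, (βm - (j : ℝ)) : ℝ) : ℂ)
        = (-1 : ℂ) ^ n * ((Real.Gamma ((n : ℝ) - βm) : ℝ) : ℂ) := by
      rw [← Complex.ofReal_mul, hΓm n]; push_cast; ring
    have hneg : (-Complex.I) ^ n = (-1 : ℂ) ^ n * Complex.I ^ n := by
      rw [← mul_pow]; norm_num
    have h2 : (-1 : ℂ) ^ n * (-1 : ℂ) ^ n = 1 := by
      rw [← mul_pow]; norm_num
    have hcast : ((αp * Real.Gamma ((n : ℝ) - βp) / lp ^ ((n : ℝ) - βp)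
        + (-1 : ℝ) ^ n * αm * Real.Gamma ((n : ℝ) - βm) / lm ^ ((n : ℝ) - βm) : ℝ) : ℂ)
        = (αp : ℂ) * (Real.Gamma ((n : ℝ) - βp) : ℂ) * ((lp ^ (βp - (n : ℝ)) : ℝ) : ℂ)
          + (-1 : ℂ) ^ n * (αm : ℂ) * (Real.Gamma ((n : ℝ) - βm) : ℂ)
            * ((lm ^ (βm - (n : ℝ)) : ℝ) : ℂ) := by
      rw [div_eq_mul_inv, div_eq_mul_inv, ← hrp, ← hrm]; push_cast; ring
    rw [hcast]
    linear_combination ((αp : ℂ) * (Real.Gamma (-βp) : ℂ)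
        * ((∏ j ∈ Finset.range n, (βp - (j : ℝ)) : ℝ) : ℂ)
        * ((lp ^ (βp - (n : ℝ)) : ℝ) : ℂ)) * hneg
      + ((-1 : ℂ) ^ n * Complex.I ^ n * (αp : ℂ) * ((lp ^ (βp - (n : ℝ)) : ℝ) : ℂ)) * hgp
      + (Complex.I ^ n * (αm : ℂ) * ((lm ^ (βm - (n : ℝ)) : ℝ) : ℂ)) * hgm
      + (Complex.I ^ n * (αp : ℂ) * ((lp ^ (βp - (n : ℝ)) : ℝ) : ℂ)
          * (Real.Gamma ((n : ℝ) - βp) : ℂ)) * h2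
end

section
/- Let μ ∈ ℝ, 0 < β₊ < 1, 0 < β₋ < 1, α₊ ≥ 0, α₋ ≥ 0 with α₊ + α₋ > 0, λ₊ > 0, λ₋ > 0, and let Ψ be the GTS characteristic exponent Ψ(ξ) = iμξ + α₊·Γ(−β₊)·((λ₊ − iξ)^{β₊} − λ₊^{β₊}) + α₋·Γ(−β₋)·((λ₋ + iξ)^{β₋} − λ₋^{β₋}). Set κ₁ = μ + α₊·Γ(1−β₊)/λ₊^{1−β₊} − α₋·Γ(1−β₋)/λ₋^{1−β₋} and κ₂ = α₊·Γ(2−β₊)/λ₊^{2−β₊} + α₋·Γ(2−β₋)/λ₋^{2−β₋} (so κ₂ > 0). Then for every real ξ, lim_{t → ∞} [ t·Ψ(ξ/√(t·κ₂)) − i·t·κ₁·ξ/√(t·κ₂) ] = −ξ²/2; consequently lim_{t → ∞} exp( t·Ψ(ξ/√(t·κ₂)) − i·t·κ₁·ξ/√(t·κ₂) ) = exp(−ξ²/2), i.e. the characteristic function of the standardized GTS Lévy process converges pointwise to the characteristic function of the standard normal distribution. -/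
/-!
Ψ is smooth with Ψ(0) = 0, Ψ'(0) = iκ₁ and Ψ''(0) = -κ₂: differentiating `(λ ∓ iξ)^β` twice
brings down `β(β - 1)λ^(β - 2)(∓i)² = -β(β - 1)λ^(β - 2)`, and the recursion `Γ(s + 1) = sΓ(s)`
turns `Γ(-β)β(β - 1)` into `Γ(2 - β)` (and `-Γ(-β)β` into `Γ(1 - β)`). Hence by Taylor's theorem
`Ψ(s) - iκ₁s + κ₂s²/2 = o(s²)`. At `s = ξ/√(tκ₂)` we have `tκ₂s² = ξ²`, so
`tΨ(s) - itκ₁s = t·o(s²) - ξ²/2 → -ξ²/2`.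
-/

open Filter Topology Asymptotics Complex

section Taylor

variable {E : Type*} [NormedAddCommGroup E] [NormedSpace ℝ E]

theorem isLittleO_sub_taylor_two {f f' : ℝ → E} {f'' : E} {x₀ : ℝ}
    (hf : ∀ x, HasDerivAt f (f' x) x) (hf' : HasDerivAt f' f'' x₀) :
    (fun x ↦ f x - f x₀ - (x - x₀) • f' x₀ - ((x - x₀) ^ 2 / 2) • f'')
      =o[𝓝 x₀] fun x ↦ (x - x₀) ^ 2 := by
  have hderiv : ∀ x ∈ Set.univ, HasDerivWithinAt
      (fun x ↦ f x - f x₀ - (x - x₀) • f' x₀ - ((x - x₀) ^ 2 / 2) • f'')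
      (f' x - f' x₀ - (x - x₀) • f'') Set.univ x := by
    intro x _
    have hlin := ((hasDerivAt_id x).sub_const x₀).smul_const (f' x₀)
    have hquad := ((((hasDerivAt_id x).sub_const x₀).pow 2).div_const 2).smul_const f''
    convert (((hf x).sub_const (f x₀)).sub hlin).sub hquad |>.hasDerivWithinAt using 1
    · ext y; simp
    · simp
  simpa using Convex.isLittleO_pow_succ_real convex_univ (Set.mem_univ x₀) hderiv (n := 1)
    (by simpa using hasDerivAt_iff_isLittleO.mp hf')

theorem tendsto_smul_comp_div_sqrt {R : ℝ → E} (hR : R =o[𝓝 0] fun s ↦ s ^ 2)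
    {c : ℝ} (hc : 0 < c) (ξ : ℝ) :
    Tendsto (fun t : ℝ ↦ t • R (ξ / √(t * c))) atTop (𝓝 0) := by
  have hu : Tendsto (fun t : ℝ ↦ ξ / √(t * c)) atTop (𝓝 0) :=
    tendsto_const_nhds.div_atTop (Real.tendsto_sqrt_atTop.comp (tendsto_id.atTop_mul_const hc))
  have hsq : (fun t : ℝ ↦ (ξ / √(t * c)) ^ 2) =O[atTop] fun t ↦ t⁻¹ := by
    refine IsBigO.of_bound (ξ ^ 2 / c) ?_
    filter_upwards [eventually_gt_atTop 0] with t ht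
    rw [div_pow, Real.sq_sqrt (by positivity), norm_div, norm_inv, norm_pow, Real.norm_eq_abs,
      Real.norm_eq_abs, Real.norm_eq_abs, abs_of_pos ht, abs_of_pos (mul_pos ht hc), sq_abs]
    exact le_of_eq (by ring)
  have := (isBigO_refl (fun t : ℝ ↦ t) atTop).smul_isLittleO
    ((hR.comp_tendsto hu).trans_isBigO hsq)
  refine (isLittleO_one_iff ℝ).mp (this.congr' EventuallyEq.rfl ?_)
  filter_upwards [eventually_gt_atTop 0] with t ht
  simp [ht.ne']

end Taylor

theorem hasDerivAt_cpow_add_mul_ofReal {l : ℝ} (hl : 0 < l) {w : ℂ} (hw : w.re = 0)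
    (c : ℂ) (s : ℝ) :
    HasDerivAt (fun s : ℝ ↦ ((l : ℂ) + w * s) ^ c) (c * ((l : ℂ) + w * s) ^ (c - 1) * w) s := by
  have hlin : HasDerivAt (fun z : ℂ ↦ (l : ℂ) + w * z) w s := by
    simpa using ((hasDerivAt_id (s : ℂ)).const_mul w).const_add (l : ℂ)
  refine (hlin.cpow_const ?_).comp_ofReal
  simp [mem_slitPlane_iff, hw, hl]

theorem isLittleO_cpow_add_mul_ofReal_sub_taylor {l : ℝ} (hl : 0 < l) {w : ℂ} (hw : w.re = 0)
    (β : ℝ) :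
    (fun s : ℝ ↦ ((l : ℂ) + w * s) ^ (β : ℂ) - (l : ℂ) ^ (β : ℂ)
        - s * (β * (l ^ (β - 1) : ℝ) * w) - s ^ 2 / 2 * (β * (β - 1) * (l ^ (β - 2) : ℝ) * w ^ 2))
      =o[𝓝 0] fun s ↦ s ^ 2 := by
  have h' := ((hasDerivAt_cpow_add_mul_ofReal hl hw ((β : ℂ) - 1) 0).const_mul (β : ℂ)).mul_const w
  have h := isLittleO_sub_taylor_two (hasDerivAt_cpow_add_mul_ofReal hl hw β) h'
  simp only [ofReal_zero, mul_zero, add_zero, sub_zero, real_smul] at h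
  refine h.congr_left fun s ↦ ?_
  rw [ofReal_cpow hl.le, ofReal_cpow hl.le]
  push_cast
  ring_nf

theorem Real.Gamma_one_sub_div_rpow {β l : ℝ} (hβ : β ≠ 0) (hl : 0 < l) :
    Real.Gamma (1 - β) / l ^ (1 - β) = -(β * Real.Gamma (-β) * l ^ (β - 1)) := by
  rw [show 1 - β = -β + 1 by ring, Real.Gamma_add_one (neg_ne_zero.mpr hβ),
    show β - 1 = -(-β + 1) by ring, Real.rpow_neg hl.le]
  ring

theorem Real.Gamma_two_sub_div_rpow {β l : ℝ} (hβ₀ : β ≠ 0) (hβ₁ : β ≠ 1) (hl : 0 < l) :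
    Real.Gamma (2 - β) / l ^ (2 - β) = β * (β - 1) * Real.Gamma (-β) * l ^ (β - 2) := by
  rw [show 2 - β = -β + 1 + 1 by ring, Real.Gamma_add_one (by contrapose! hβ₁; linarith),
    Real.Gamma_add_one (neg_ne_zero.mpr hβ₀), show β - 2 = -(-β + 1 + 1) by ring,
    Real.rpow_neg hl.le]
  ring

noncomputable def gtsExponent (μ βp βm αp αm lp lm : ℝ) (ξ : ℝ) : ℂ :=
  I * μ * ξ + αp * Real.Gamma (-βp) * (((lp : ℂ) - I * ξ) ^ (βp : ℂ) - (lp : ℂ) ^ (βp : ℂ))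
    + αm * Real.Gamma (-βm) * (((lm : ℂ) + I * ξ) ^ (βm : ℂ) - (lm : ℂ) ^ (βm : ℂ))

noncomputable def gtsCumulant₁ (μ βp βm αp αm lp lm : ℝ) : ℝ :=
  μ + αp * Real.Gamma (1 - βp) / lp ^ (1 - βp) - αm * Real.Gamma (1 - βm) / lm ^ (1 - βm)

noncomputable def gtsCumulant₂ (βp βm αp αm lp lm : ℝ) : ℝ :=
  αp * Real.Gamma (2 - βp) / lp ^ (2 - βp) + αm * Real.Gamma (2 - βm) / lm ^ (2 - βm)

theorem gtsCumulant₂_pos {βp βm αp αm lp lm : ℝ} (hβp : βp < 2) (hβm : βm < 2)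
    (hαp : 0 ≤ αp) (hαm : 0 ≤ αm) (hα : 0 < αp + αm) (hlp : 0 < lp) (hlm : 0 < lm) :
    0 < gtsCumulant₂ βp βm αp αm lp lm := by
  have hp : 0 < Real.Gamma (2 - βp) / lp ^ (2 - βp) :=
    div_pos (Real.Gamma_pos_of_pos (by linarith)) (Real.rpow_pos_of_pos hlp _)
  have hm : 0 < Real.Gamma (2 - βm) / lm ^ (2 - βm) :=
    div_pos (Real.Gamma_pos_of_pos (by linarith)) (Real.rpow_pos_of_pos hlm _)
  rw [gtsCumulant₂, mul_div_assoc, mul_div_assoc]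
  rcases hαp.lt_or_eq with hαp | rfl
  · exact add_pos_of_pos_of_nonneg (mul_pos hαp hp) (mul_nonneg hαm hm.le)
  · simpa using mul_pos (zero_add αm ▸ hα) hm

theorem isLittleO_gtsExponent_sub_taylor (μ αp αm : ℝ) {βp βm lp lm : ℝ}
    (hβp₀ : βp ≠ 0) (hβp₁ : βp ≠ 1) (hβm₀ : βm ≠ 0) (hβm₁ : βm ≠ 1) (hlp : 0 < lp) (hlm : 0 < lm) :
    (fun s : ℝ ↦ gtsExponent μ βp βm αp αm lp lm s - I * gtsCumulant₁ μ βp βm αp αm lp lm * s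
        + gtsCumulant₂ βp βm αp αm lp lm / 2 * s ^ 2) =o[𝓝 0] fun s ↦ s ^ 2 := by
  have hp := isLittleO_cpow_add_mul_ofReal_sub_taylor hlp (w := -I) (by simp) βp
  simp only [neg_mul, ← sub_eq_add_neg] at hp
  have hm := isLittleO_cpow_add_mul_ofReal_sub_taylor hlm (w := I) (by simp) βm
  refine ((hp.const_mul_left (αp * Real.Gamma (-βp) : ℂ)).add
    (hm.const_mul_left (αm * Real.Gamma (-βm) : ℂ))).congr_left fun s ↦ ?_
  simp only [gtsExponent, gtsCumulant₁, gtsCumulant₂, mul_div_assoc,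
    Real.Gamma_one_sub_div_rpow hβp₀ hlp, Real.Gamma_one_sub_div_rpow hβm₀ hlm,
    Real.Gamma_two_sub_div_rpow hβp₀ hβp₁ hlp, Real.Gamma_two_sub_div_rpow hβm₀ hβm₁ hlm]
  push_cast
  simp only [neg_sq, I_sq]
  ring

/-- Asymptotic normality of the standardized GTS Lévy process: with cumulants `κ₁, κ₂`
(so `κ₂ > 0`), for every real `ξ`,
`t·Ψ(ξ/√(tκ₂)) − i·t·κ₁·ξ/√(tκ₂) → −ξ²/2` as `t → ∞`, and consequently the
characteristic function of the standardized process converges to `exp(−ξ²/2)`. -/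
theorem gts_asymptotic_normality (μ βp βm αp αm lp lm : ℝ)
    (hβp0 : 0 < βp) (hβp1 : βp < 1) (hβm0 : 0 < βm) (hβm1 : βm < 1)
    (hαp : 0 ≤ αp) (hαm : 0 ≤ αm) (hα : 0 < αp + αm) (hlp : 0 < lp) (hlm : 0 < lm)
    (Ψ : ℝ → ℂ)
    (hΨ : ∀ ξ : ℝ, Ψ ξ = Complex.I * μ * ξ
        + αp * Real.Gamma (-βp)
            * (((lp : ℂ) - Complex.I * ξ) ^ (βp : ℂ) - (lp : ℂ) ^ (βp : ℂ))
        + αm * Real.Gamma (-βm)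
            * (((lm : ℂ) + Complex.I * ξ) ^ (βm : ℂ) - (lm : ℂ) ^ (βm : ℂ)))
    (κ₁ κ₂ : ℝ)
    (hκ₁ : κ₁ = μ + αp * Real.Gamma (1 - βp) / lp ^ (1 - βp)
        - αm * Real.Gamma (1 - βm) / lm ^ (1 - βm))
    (hκ₂ : κ₂ = αp * Real.Gamma (2 - βp) / lp ^ (2 - βp)
        + αm * Real.Gamma (2 - βm) / lm ^ (2 - βm))
    (ξ : ℝ) :
    0 < κ₂ ∧
      Filter.Tendsto
        (fun t : ℝ => (t : ℂ) * Ψ (ξ / Real.sqrt (t * κ₂))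
            - Complex.I * t * κ₁ * ξ / Real.sqrt (t * κ₂))
        Filter.atTop (nhds (-(ξ : ℂ) ^ 2 / 2)) ∧
      Filter.Tendsto
        (fun t : ℝ => Complex.exp ((t : ℂ) * Ψ (ξ / Real.sqrt (t * κ₂))
            - Complex.I * t * κ₁ * ξ / Real.sqrt (t * κ₂)))
        Filter.atTop (nhds (Complex.exp (-(ξ : ℂ) ^ 2 / 2))) := by
  obtain rfl : Ψ = gtsExponent μ βp βm αp αm lp lm := funext hΨ
  have hκ₂pos : 0 < κ₂ :=
    hκ₂ ▸ gtsCumulant₂_pos (hβp1.trans one_lt_two) (hβm1.trans one_lt_two) hαp hαm hα hlp hlm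
  have hexp : (fun s : ℝ ↦ gtsExponent μ βp βm αp αm lp lm s - I * κ₁ * s + κ₂ / 2 * s ^ 2)
      =o[𝓝 0] fun s ↦ s ^ 2 :=
    hκ₁ ▸ hκ₂ ▸ isLittleO_gtsExponent_sub_taylor μ αp αm hβp0.ne' hβp1.ne hβm0.ne' hβm1.ne hlp hlm
  have hR := tendsto_smul_comp_div_sqrt hexp hκ₂pos ξ
  have hmain : Tendsto (fun t : ℝ ↦ (t : ℂ) * gtsExponent μ βp βm αp αm lp lm (ξ / √(t * κ₂))
      - I * t * κ₁ * ξ / √(t * κ₂)) atTop (𝓝 (-(ξ : ℂ) ^ 2 / 2)) := by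
    rw [neg_div, ← zero_sub]
    refine (hR.sub_const _).congr' ?_
    filter_upwards [eventually_gt_atTop 0] with t ht
    have hsq : ((√(t * κ₂) : ℝ) : ℂ) ^ 2 = t * κ₂ := by
      rw [← ofReal_pow, Real.sq_sqrt (mul_pos ht hκ₂pos).le, ofReal_mul]
    have hne : ((√(t * κ₂) : ℝ) : ℂ) ≠ 0 :=
      ofReal_ne_zero.mpr (Real.sqrt_pos.mpr (mul_pos ht hκ₂pos)).ne'
    simp only [real_smul, ofReal_div]
    field_simp
    linear_combination -(ξ : ℂ) ^ 2 * hsq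
  exact ⟨hκ₂pos, hmain, hmain.cexp⟩
end
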